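/- arXiv:2211.08618 — 9 statements merged into one kernel-verified Lean document; each statement's English description precedes it below -/
import Mathlib

section
/- Let A be an invertible n×n real matrix. Then there exists a vector x with all entries strictly positive such that Ax has all entries strictly positive, if and only if there exists a vector x with all entries strictly positive such that Ax has all entries nonnegative. -/
open Matrix

/-- For an invertible real matrix `A`, there exists an entrywise positive
vector `x` with `A x` entrywise positive iff there exists an entrywise positive vector
`x` with `A x` entrywise nonnegative. -/
theorem semipositive_iff_of_invertible {n : ℕ} (A : Matrix (Fin n) (Fin n) ℝ)
    (hA : IsUnit A) :
    (∃ x : Fin n → ℝ, (∀ i, 0 < x i) ∧ ∀ i, 0 < A.mulVec x i) ↔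
      (∃ x : Fin n → ℝ, (∀ i, 0 < x i) ∧ ∀ i, 0 ≤ A.mulVec x i) := by
  constructor
  · rintro ⟨x, hx, hAx⟩
    exact ⟨x, hx, fun i => (hAx i).le⟩
  · rintro ⟨x, hx, hAx⟩
    rcases Nat.eq_zero_or_pos n with h0 | hn
    · subst h0
      exact ⟨x, hx, fun i => i.elim0⟩
    · have hne : Nonempty (Fin n) := ⟨⟨0, hn⟩⟩
      set z := ((hA.unit⁻¹ : (Matrix (Fin n) (Fin n) ℝ)ˣ) : Matrix (Fin n) (Fin n) ℝ).mulVec 1 with hzdef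
      have hz : A.mulVec z = 1 := by
        have hAu : A * ((hA.unit⁻¹ : (Matrix (Fin n) (Fin n) ℝ)ˣ) : Matrix (Fin n) (Fin n) ℝ) = 1 := by
          calc A * (hA.unit⁻¹ : (Matrix (Fin n) (Fin n) ℝ)ˣ)
              = (hA.unit : Matrix (Fin n) (Fin n) ℝ) * hA.unit⁻¹ := by rw [hA.unit_spec]
            _ = 1 := Units.mul_inv _
        rw [hzdef, Matrix.mulVec_mulVec, hAu, Matrix.one_mulVec]
      set t := Finset.univ.inf' Finset.univ_nonempty (fun i => x i / (1 + |z i|)) with htdef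
      have ht : 0 < t := by
        rw [htdef, Finset.lt_inf'_iff]
        intro i _
        exact div_pos (hx i) (by positivity)
      have htle : ∀ i, t * (1 + |z i|) ≤ x i := by
        intro i
        have h := Finset.inf'_le (fun i => x i / (1 + |z i|)) (Finset.mem_univ i)
        rw [← le_div_iff₀ (by positivity)]
        exact h
      refine ⟨x + t • z, fun i => ?_, fun i => ?_⟩
      · simp only [Pi.add_apply, Pi.smul_apply, smul_eq_mul]
        nlinarith [htle i, neg_abs_le (z i), abs_nonneg (z i)]
      · rw [Matrix.mulVec_add, Matrix.mulVec_smul, hz]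
        simp only [Pi.add_apply, Pi.smul_apply, Pi.one_apply, smul_eq_mul, mul_one]
        linarith [hAx i, ht]
end

section
/- Let A be an n×m real matrix with n ≤ m, and suppose σ ⊆ [m] with |σ| = n is such that the n×n submatrix A_{[n]σ} (columns indexed by σ) is an invertible Z-matrix (off-diagonal entries nonpositive), and all entries of A in columns outside σ are nonpositive. Then there exists x ∈ ℝ^m with all entries strictly positive satisfying Ax ≥ 0 (entrywise) if and only if A_{[n]σ} is a nonsingular M-matrix (i.e., A_{[n]σ} = sI − B with B entrywise nonnegative and s > ρ(B)). -/
open Matrix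
open scoped ENNReal NNReal

/-- The spectral radius of a real matrix: supremum of the moduli of its complex
eigenvalues (spectrum of the matrix viewed over `ℂ`). -/
noncomputable def specRad {m : Type*} [Fintype m] [DecidableEq m]
    (A : Matrix m m ℝ) : ℝ :=
  sSup {r : ℝ | ∃ μ ∈ spectrum ℂ (A.map Complex.ofReal), r = ‖μ‖}

/-- `A` is a nonsingular M-matrix: `A = s•I - B` with `B` entrywise nonnegative
and `s > ρ(B)`. -/
def IsNonsingMMatrix {m : Type*} [Fintype m] [DecidableEq m]
    (A : Matrix m m ℝ) : Prop :=
  ∃ (s : ℝ) (B : Matrix m m ℝ), (∀ i j, 0 ≤ B i j) ∧ specRad B < s ∧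
    A = s • (1 : Matrix m m ℝ) - B

namespace MMatrixAux

variable {n : Type*} [Fintype n] [DecidableEq n]

lemma mem_spectrum_iff_eig (M : Matrix n n ℂ) (μ : ℂ) :
    μ ∈ spectrum ℂ M ↔ ∃ v : n → ℂ, v ≠ 0 ∧ M.mulVec v = μ • v := by
  rw [spectrum.mem_iff, Matrix.isUnit_iff_isUnit_det, isUnit_iff_ne_zero, not_not,
    ← Matrix.exists_mulVec_eq_zero_iff]
  constructor
  · rintro ⟨v, hv, h⟩
    refine ⟨v, hv, ?_⟩
    have : (algebraMap ℂ (Matrix n n ℂ) μ).mulVec v - M.mulVec v = 0 := by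
      rw [← Matrix.sub_mulVec, h]
    have h2 : (algebraMap ℂ (Matrix n n ℂ) μ).mulVec v = μ • v := by
      rw [Algebra.algebraMap_eq_smul_one, Matrix.smul_mulVec, Matrix.one_mulVec]
    rw [h2] at this
    have := sub_eq_zero.mp this
    exact this.symm
  · rintro ⟨v, hv, h⟩
    refine ⟨v, hv, ?_⟩
    rw [Matrix.sub_mulVec, Algebra.algebraMap_eq_smul_one, Matrix.smul_mulVec,
      Matrix.one_mulVec, h]
    simp

lemma eig_bound (B : Matrix n n ℝ) (hB : ∀ i j, 0 ≤ B i j) (hd : ∀ i, 0 < B i i)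
    (x : n → ℝ) (hx : ∀ i, 0 < x i) (s : ℝ) (hBx : ∀ i, B.mulVec x i ≤ s * x i)
    (μ : ℂ) (hμ : μ ∈ spectrum ℂ (B.map Complex.ofReal)) :
    ‖μ‖ ≤ s ∧ (‖μ‖ = s → μ = (s : ℂ)) := by
  obtain ⟨v, hv, heig⟩ := (mem_spectrum_iff_eig _ _).mp hμ
  obtain ⟨j₁, hj₁⟩ := Function.ne_iff.mp hv
  simp only [Pi.zero_apply] at hj₁
  have hne : (Finset.univ : Finset n).Nonempty := ⟨j₁, Finset.mem_univ _⟩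
  obtain ⟨i₀, -, hmax⟩ := Finset.exists_max_image Finset.univ (fun i => ‖v i‖ / x i) hne
  set t := ‖v i₀‖ / x i₀ with ht
  have hvle : ∀ j, ‖v j‖ ≤ t * x j := by
    intro j
    have h := hmax j (Finset.mem_univ j)
    calc ‖v j‖ = ‖v j‖ / x j * x j := (div_mul_cancel₀ _ (hx j).ne').symm
    _ ≤ t * x j := mul_le_mul_of_nonneg_right h (hx j).le
  have htpos : 0 < t := by
    have h1 : 0 < ‖v j₁‖ / x j₁ := div_pos (norm_pos_iff.mpr hj₁) (hx j₁)
    exact h1.trans_le (hmax j₁ (Finset.mem_univ _))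
  have hvi₀ : ‖v i₀‖ = t * x i₀ := (div_mul_cancel₀ _ (hx i₀).ne').symm
  have heq : ∀ i, ∑ j, (B i j : ℂ) * v j = μ * v i := by
    intro i
    have := congrFun heig i
    simpa [Matrix.mulVec, dotProduct, Matrix.map_apply] using this
  have hBsplit : (B *ᵥ x) i₀ = B i₀ i₀ * x i₀ + ∑ j ∈ Finset.univ.erase i₀, B i₀ j * x j := by
    rw [Matrix.mulVec, dotProduct, ← Finset.add_sum_erase _ _ (Finset.mem_univ i₀)]
  have key : ‖μ - (B i₀ i₀ : ℂ)‖ * ‖v i₀‖ ≤ t * (s * x i₀ - B i₀ i₀ * x i₀) := by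
    have h1 : (μ - (B i₀ i₀ : ℂ)) * v i₀ = ∑ j ∈ Finset.univ.erase i₀, (B i₀ j : ℂ) * v j := by
      have h := heq i₀
      rw [← Finset.add_sum_erase _ _ (Finset.mem_univ i₀)] at h
      linear_combination -h
    calc ‖μ - (B i₀ i₀:ℂ)‖ * ‖v i₀‖ = ‖(μ - (B i₀ i₀:ℂ)) * v i₀‖ := (norm_mul _ _).symm
    _ ≤ ∑ j ∈ Finset.univ.erase i₀, ‖(B i₀ j : ℂ) * v j‖ := by
        rw [h1]; exact norm_sum_le _ _
    _ ≤ ∑ j ∈ Finset.univ.erase i₀, B i₀ j * (t * x j) := by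
        apply Finset.sum_le_sum
        intro j hj
        rw [norm_mul, Complex.norm_real, Real.norm_eq_abs, abs_of_nonneg (hB i₀ j)]
        exact mul_le_mul_of_nonneg_left (hvle j) (hB i₀ j)
    _ = t * ∑ j ∈ Finset.univ.erase i₀, B i₀ j * x j := by
        rw [Finset.mul_sum]; exact Finset.sum_congr rfl fun j _ => by ring
    _ ≤ t * (s * x i₀ - B i₀ i₀ * x i₀) := by
        apply mul_le_mul_of_nonneg_left _ htpos.le
        have := hBx i₀
        linarith [hBsplit]
  have hdisk : ‖μ - (B i₀ i₀ : ℂ)‖ ≤ s - B i₀ i₀ := by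
    rw [hvi₀] at key
    nlinarith [key, mul_pos htpos (hx i₀)]
  have hanorm : ‖((B i₀ i₀ : ℝ) : ℂ)‖ = B i₀ i₀ := by
    rw [Complex.norm_real, Real.norm_eq_abs, abs_of_pos (hd i₀)]
  have hle : ‖μ‖ ≤ s := by
    have h9 : ‖μ‖ ≤ ‖μ - (B i₀ i₀:ℂ)‖ + ‖((B i₀ i₀:ℝ):ℂ)‖ := by
      simpa using norm_add_le (μ - (B i₀ i₀:ℂ)) ((B i₀ i₀:ℝ):ℂ)
    rw [hanorm] at h9
    linarith
  refine ⟨hle, ?_⟩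
  intro hns
  have hapos : 0 < B i₀ i₀ := hd i₀
  have h2 : μ.re ^ 2 + μ.im ^ 2 = s ^ 2 := by
    have h := Complex.sq_norm μ
    rw [Complex.normSq_apply, hns] at h
    linear_combination -h
  have h3 : (μ.re - B i₀ i₀) ^ 2 + μ.im ^ 2 ≤ (s - B i₀ i₀) ^ 2 := by
    have h4 := Complex.sq_norm (μ - (B i₀ i₀:ℂ))
    rw [Complex.normSq_apply] at h4
    have h5 : 0 ≤ s - B i₀ i₀ := le_trans (norm_nonneg _) hdisk
    have h6 : ‖μ - (B i₀ i₀:ℂ)‖ ^ 2 ≤ (s - B i₀ i₀)^2 := by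
      nlinarith [hdisk, norm_nonneg (μ - (B i₀ i₀:ℂ))]
    simp only [Complex.sub_re, Complex.sub_im, Complex.ofReal_re, Complex.ofReal_im] at h4
    nlinarith [h4, h6]
  have h7 : μ.re ≤ s := by
    have h8 := Complex.abs_re_le_norm μ
    rw [hns] at h8
    exact (le_abs_self μ.re).trans h8
  have hre : μ.re = s := by
    have h10 : s ≤ μ.re := by nlinarith [h2, h3, hapos]
    linarith
  have him : μ.im = 0 := by
    have h11 : μ.im ^ 2 = 0 := by nlinarith [h2, hre]
    exact pow_eq_zero_iff two_ne_zero |>.mp h11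
  apply Complex.ext <;> simp [hre, him]

lemma specSet_eq (B : Matrix n n ℝ) :
    {r : ℝ | ∃ μ ∈ spectrum ℂ (B.map Complex.ofReal), r = ‖μ‖}
      = (fun μ : ℂ => ‖μ‖) '' spectrum ℂ (B.map Complex.ofReal) := by
  ext r; simp [Set.mem_image, eq_comm]

lemma specSet_finite (B : Matrix n n ℝ) :
    ({r : ℝ | ∃ μ ∈ spectrum ℂ (B.map Complex.ofReal), r = ‖μ‖}).Finite := by
  rw [specSet_eq]; exact (Matrix.finite_spectrum _).image _

lemma norm_le_specRad (B : Matrix n n ℝ) (μ : ℂ)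
    (hμ : μ ∈ spectrum ℂ (B.map Complex.ofReal)) : ‖μ‖ ≤ specRad B :=
  le_csSup (specSet_finite B).bddAbove ⟨μ, hμ, rfl⟩

lemma specRad_nonneg (B : Matrix n n ℝ) : 0 ≤ specRad B := by
  rcases Set.eq_empty_or_nonempty
      {r : ℝ | ∃ μ ∈ spectrum ℂ (B.map Complex.ofReal), r = ‖μ‖} with h | h
  · rw [specRad, h, Real.sSup_empty]
  · obtain ⟨r, hr⟩ := h
    obtain ⟨μ, hμ, rfl⟩ := hr
    exact (norm_nonneg μ).trans (norm_le_specRad B μ hμ)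

lemma specRad_lt (B : Matrix n n ℝ) (s : ℝ) (hs : 0 < s)
    (h : ∀ μ ∈ spectrum ℂ (B.map Complex.ofReal), ‖μ‖ < s) : specRad B < s := by
  rcases Set.eq_empty_or_nonempty
      {r : ℝ | ∃ μ ∈ spectrum ℂ (B.map Complex.ofReal), r = ‖μ‖} with he | hne
  · rw [specRad, he, Real.sSup_empty]; exact hs
  · have := hne.csSup_mem (specSet_finite B)
    obtain ⟨μ, hμ, hr⟩ := this
    rw [specRad, hr]
    exact h μ hμ

lemma pow_entry_nonneg (C : Matrix n n ℝ) (hC : ∀ i j, 0 ≤ C i j) (k : ℕ) :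
    ∀ i j, 0 ≤ (C ^ k) i j := by
  induction k with
  | zero => intro i j; rw [pow_zero]; by_cases h : i = j <;> simp [Matrix.one_apply, h]
  | succ k ih =>
    intro i j
    rw [pow_succ, Matrix.mul_apply]
    exact Finset.sum_nonneg fun l _ => mul_nonneg (ih i l) (hC l j)

attribute [local instance] Matrix.linftyOpNormedRing Matrix.linftyOpNormedAlgebra

attribute [local instance] Matrix.linftyOpNormedRing Matrix.linftyOpNormedAlgebra

lemma exists_pos_mulVec_lt (B : Matrix n n ℝ) (hB : ∀ i j, 0 ≤ B i j) (s : ℝ)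
    (hρ : specRad B < s) :
    ∃ x : n → ℝ, (∀ i, 0 < x i) ∧ ∀ i, B.mulVec x i < s * x i := by
  have hs : 0 < s := (specRad_nonneg B).trans_lt hρ
  set C : Matrix n n ℝ := s⁻¹ • B with hCdef
  have hC : ∀ i j, 0 ≤ C i j := fun i j => by
    simp only [hCdef, Matrix.smul_apply, smul_eq_mul]
    exact mul_nonneg (inv_nonneg.mpr hs.le) (hB i j)
  have hmap : C.map Complex.ofReal = ((s:ℂ))⁻¹ • (B.map Complex.ofReal) := by
    ext i j
    simp [hCdef, Matrix.map_apply, Matrix.smul_apply, smul_eq_mul, Complex.ofReal_mul,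
      Complex.ofReal_inv]
  -- every eigenvalue of C has modulus < 1
  have hev : ∀ μ ∈ spectrum ℂ (C.map Complex.ofReal), ‖μ‖ < 1 := by
    intro μ hμ
    obtain ⟨v, hv, heig⟩ := (mem_spectrum_iff_eig _ _).mp hμ
    have hsC : ((s:ℂ)) ≠ 0 := by exact_mod_cast hs.ne'
    have hBv : (B.map Complex.ofReal).mulVec v = ((s:ℂ) * μ) • v := by
      rw [hmap, Matrix.smul_mulVec] at heig
      have h := congrArg (fun w => (s:ℂ) • w) heig
      simp only [smul_smul, mul_inv_cancel₀ hsC, one_smul] at h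
      exact h
    have hmem : (s:ℂ) * μ ∈ spectrum ℂ (B.map Complex.ofReal) :=
      (mem_spectrum_iff_eig _ _).mpr ⟨v, hv, hBv⟩
    have h1 : ‖(s:ℂ) * μ‖ ≤ specRad B := norm_le_specRad B _ hmem
    rw [norm_mul, Complex.norm_real, Real.norm_eq_abs, abs_of_pos hs] at h1
    have : s * ‖μ‖ < s * 1 := by rw [mul_one]; exact h1.trans_lt hρ
    exact lt_of_mul_lt_mul_left this hs.le
  -- spectral radius of C' < 1 in ℝ≥0∞
  set C' : Matrix n n ℂ := C.map Complex.ofReal with hC'def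
  have hr0 : 0 ≤ specRad C := specRad_nonneg C
  have hr1 : specRad C < 1 := specRad_lt C 1 one_pos hev
  have hsr : spectralRadius ℂ C' < 1 := by
    have hle : spectralRadius ℂ C' ≤ ENNReal.ofReal (specRad C) := by
      rw [spectralRadius]
      refine iSup₂_le fun μ hμ => ?_
      rw [← ENNReal.ofReal_coe_nnreal, coe_nnnorm]
      exact ENNReal.ofReal_le_ofReal (norm_le_specRad C μ hμ)
    exact hle.trans_lt (ENNReal.ofReal_lt_one.mpr hr1)
  -- get N ≥ 1 with ‖C'^N‖ < 1
  have htend := spectrum.pow_nnnorm_pow_one_div_tendsto_nhds_spectralRadius C'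
  have hev2 := (htend.eventually_lt_const hsr).and (Filter.eventually_ge_atTop 1)
  obtain ⟨N, hN⟩ := hev2.exists
  obtain ⟨hNlt, hN1⟩ := hN
  have hNne : (N:ℝ) ≠ 0 := Nat.cast_ne_zero.mpr (by omega)
  have hnorm_lt : ‖C' ^ N‖ < 1 := by
    have h1 : ((‖C' ^ N‖₊ : ℝ≥0∞)) < 1 := by
      have h2 : ((‖C' ^ N‖₊ : ℝ≥0∞)) = (((‖C' ^ N‖₊ : ℝ≥0∞)) ^ (1 / (N:ℝ))) ^ (N:ℝ) := by
        rw [← ENNReal.rpow_mul, one_div, inv_mul_cancel₀ hNne, ENNReal.rpow_one]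
      rw [h2]
      exact ENNReal.rpow_lt_one hNlt (by positivity)
    have h3 : ‖C' ^ N‖₊ < 1 := by exact_mod_cast h1
    exact_mod_cast h3
  -- row sums of C^N are < 1
  have hmappow : (C ^ N).map Complex.ofReal = C' ^ N := by
    have := map_pow (Complex.ofRealHom.mapMatrix) C N
    exact this
  have hrow : ∀ i, ∑ j, (C ^ N) i j < 1 := by
    intro i
    have h4 : (∑ j, ‖(C' ^ N) i j‖₊) ≤ ‖C' ^ N‖₊ := by
      rw [Matrix.linfty_opNNNorm_def]
      exact Finset.le_sup (f := fun i => ∑ j, ‖(C' ^ N) i j‖₊) (Finset.mem_univ i)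
    have h5 : (∑ j, ‖(C' ^ N) i j‖) ≤ ‖C' ^ N‖ := by
      have := h4
      rw [← NNReal.coe_le_coe] at this
      simpa [NNReal.coe_sum] using this
    have h6 : ∑ j, (C ^ N) i j = ∑ j, ‖(C' ^ N) i j‖ := by
      apply Finset.sum_congr rfl
      intro j _
      rw [← hmappow, Matrix.map_apply, Complex.norm_real, Real.norm_eq_abs,
        abs_of_nonneg (pow_entry_nonneg C hC N i j)]
    rw [h6]
    exact h5.trans_lt hnorm_lt
  -- construct x
  set G : Matrix n n ℝ := ∑ k ∈ Finset.range N, C ^ k with hGdef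
  set x : n → ℝ := G.mulVec (fun _ => 1) with hxdef
  have hGnn : ∀ i j, 0 ≤ G i j := by
    intro i j
    rw [hGdef, Matrix.sum_apply]
    exact Finset.sum_nonneg fun k _ => pow_entry_nonneg C hC k i j
  have hGone : ∀ i j, (1 : Matrix n n ℝ) i j ≤ G i j := by
    intro i j
    rw [hGdef, Matrix.sum_apply]
    have h0 : (0:ℕ) ∈ Finset.range N := Finset.mem_range.mpr (by omega)
    calc (1 : Matrix n n ℝ) i j = (C ^ 0) i j := by rw [pow_zero]
    _ ≤ ∑ k ∈ Finset.range N, (C ^ k) i j :=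
        Finset.single_le_sum (fun k _ => pow_entry_nonneg C hC k i j) h0
  have hxpos : ∀ i, 0 < x i := by
    intro i
    have h7 : (1:ℝ) ≤ x i := by
      have : x i = ∑ j, G i j * 1 := rfl
      rw [this]
      calc (1:ℝ) = ∑ j, (1 : Matrix n n ℝ) i j := by simp [Matrix.one_apply]
      _ ≤ ∑ j, G i j * 1 := Finset.sum_le_sum fun j _ => by
            simpa using hGone i j
    linarith
  refine ⟨x, hxpos, ?_⟩
  have hCG : C * G + 1 = G + C ^ N := by
    rw [hGdef, Finset.mul_sum]
    have h8 : ∀ k, C * C ^ k = C ^ (k+1) := fun k => (pow_succ' C k).symm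
    simp_rw [h8]
    have h12 := Finset.sum_range_succ' (fun k => C ^ k) N
    have h13 := Finset.sum_range_succ (fun k => C ^ k) N
    rw [pow_zero] at h12
    exact h12.symm.trans h13
  intro i
  have hBsC : B = s • C := by
    rw [hCdef, smul_smul, mul_inv_cancel₀ hs.ne', one_smul]
  have h9 : B.mulVec x = s • ((C * G).mulVec (fun _ => 1)) := by
    rw [hBsC, Matrix.smul_mulVec, hxdef, Matrix.mulVec_mulVec]
  have h10 : (C * G).mulVec (fun _ => (1:ℝ)) i = x i + (C ^ N).mulVec (fun _ => 1) i - 1 := by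
    have := congrArg (fun M : Matrix n n ℝ => M.mulVec (fun _ => (1:ℝ)) i) hCG
    simp only [Matrix.add_mulVec, Pi.add_apply, Matrix.one_mulVec] at this
    rw [hxdef]
    linarith [this]
  have h11 : (C ^ N).mulVec (fun _ => (1:ℝ)) i < 1 := by
    have : (C ^ N).mulVec (fun _ => (1:ℝ)) i = ∑ j, (C ^ N) i j := by
      simp [Matrix.mulVec, dotProduct]
    rw [this]
    exact hrow i
  rw [h9]
  simp only [Pi.smul_apply, smul_eq_mul]
  rw [h10]
  have := hxpos i
  nlinarith [h11, hs]

end MMatrixAux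

open MMatrixAux in
/-- rectangular semipositivity. Let `A` be `n × m` with `n ≤ m`,
`σ ⊆ [m]` of cardinality `n` whose column-submatrix `S = A_{[n]σ}` is an invertible
Z-matrix, and all columns of `A` outside `σ` are entrywise nonpositive. Then there is
an entrywise positive `x ∈ ℝ^m` with `A x ≥ 0` iff `S` is a nonsingular M-matrix. -/
theorem rectangular_semipositivity {n m : ℕ} (hnm : n ≤ m)
    (A : Matrix (Fin n) (Fin m) ℝ) (σ : Finset (Fin m)) (hcard : σ.card = n)
    (e : Fin n ≃ {j // j ∈ σ})
    (hZ : ∀ i j : Fin n, i ≠ j → A i (e j).1 ≤ 0)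
    (hdet : (A.submatrix id (fun j : Fin n => (e j).1)).det ≠ 0)
    (hout : ∀ j : Fin m, j ∉ σ → ∀ i, A i j ≤ 0) :
    (∃ x : Fin m → ℝ, (∀ j, 0 < x j) ∧ ∀ i, 0 ≤ A.mulVec x i) ↔
      IsNonsingMMatrix (A.submatrix id (fun j : Fin n => (e j).1)) := by
  set S : Matrix (Fin n) (Fin n) ℝ := A.submatrix id (fun j : Fin n => (e j).1) with hS
  constructor
  · rintro ⟨x, hxpos, hAx⟩
    set y : Fin n → ℝ := fun i => x (e i).1 with hy
    have hypos : ∀ i, 0 < y i := fun i => hxpos _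
    have hSy : ∀ i, 0 ≤ S.mulVec y i := by
      intro i
      have hsplit : A.mulVec x i = ∑ j ∈ σ, A i j * x j + ∑ j ∈ σᶜ, A i j * x j := by
        rw [Matrix.mulVec, dotProduct, ← Finset.sum_add_sum_compl σ]
      have hneg : ∑ j ∈ σᶜ, A i j * x j ≤ 0 :=
        Finset.sum_nonpos fun j hj => mul_nonpos_of_nonpos_of_nonneg
          (hout j (Finset.mem_compl.mp hj) i) (hxpos j).le
      have hre : S.mulVec y i = ∑ j ∈ σ, A i j * x j := by
        rw [Matrix.mulVec, dotProduct, ← Finset.sum_coe_sort σ (fun j => A i j * x j)]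
        exact Fintype.sum_equiv e _ _ (fun k => rfl)
      have h0 := hAx i
      rw [hsplit] at h0
      linarith [hre]
    -- build s and B
    set s : ℝ := 1 + ∑ i, |S i i| with hs
    have hs1 : ∀ i, |S i i| ≤ ∑ k, |S k k| :=
      fun i => Finset.single_le_sum (fun k _ => abs_nonneg (S k k)) (Finset.mem_univ i)
    set B : Matrix (Fin n) (Fin n) ℝ := s • (1 : Matrix (Fin n) (Fin n) ℝ) - S with hB
    have hBd : ∀ i, B i i = s - S i i := by
      intro i; simp [hB, Matrix.one_apply]
    have hBo : ∀ i j, i ≠ j → B i j = - S i j := by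
      intro i j hij; simp [hB, Matrix.one_apply, hij]
    have hd : ∀ i, 0 < B i i := by
      intro i
      rw [hBd i]
      have := hs1 i
      have h2 := le_abs_self (S i i)
      rw [hs]; linarith
    have hBnn : ∀ i j, 0 ≤ B i j := by
      intro i j
      by_cases hij : i = j
      · subst hij; exact (hd i).le
      · rw [hBo i j hij]
        have : S i j = A i (e j).1 := rfl
        rw [this]
        linarith [hZ i j hij]
    have hBmul : ∀ i, B.mulVec y i = s * y i - S.mulVec y i := by
      intro i
      rw [hB, Matrix.sub_mulVec, Matrix.smul_mulVec, Matrix.one_mulVec]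
      simp
    have hBx : ∀ i, B.mulVec y i ≤ s * y i := by
      intro i; rw [hBmul i]; linarith [hSy i]
    have hspos : 0 < s := by
      rw [hs]
      have : 0 ≤ ∑ i, |S i i| := Finset.sum_nonneg fun i _ => abs_nonneg _
      linarith
    have hlt : ∀ μ ∈ spectrum ℂ (B.map Complex.ofReal), ‖μ‖ < s := by
      intro μ hμ
      obtain ⟨hle, heqs⟩ := eig_bound B hBnn hd y hypos s hBx μ hμ
      rcases lt_or_eq_of_le hle with h | h
      · exact h
      · exfalso
        have hμs : μ = (s : ℂ) := heqs h
        subst hμs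
        obtain ⟨v, hv, heig⟩ := (mem_spectrum_iff_eig _ _).mp hμ
        have hSv : (S.map Complex.ofReal).mulVec v = 0 := by
          have hSmap : S.map Complex.ofReal
              = (s : ℂ) • (1 : Matrix (Fin n) (Fin n) ℂ) - B.map Complex.ofReal := by
            ext i j
            by_cases hij : i = j
            · subst hij
              simp [Matrix.map_apply, hBd i, Matrix.one_apply, Complex.ofReal_sub]
            · simp [Matrix.map_apply, hBo i j hij, Matrix.one_apply, hij]
          rw [hSmap, Matrix.sub_mulVec, Matrix.smul_mulVec, Matrix.one_mulVec, heig]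
          simp
        have hdet0 : (S.map Complex.ofReal).det = 0 :=
          (Matrix.exists_mulVec_eq_zero_iff).mp ⟨v, hv, hSv⟩
        have : (Complex.ofRealHom) S.det = 0 := by
          rw [RingHom.map_det]
          exact hdet0
        exact hdet (Complex.ofReal_eq_zero.mp this)
    have hρ : specRad B < s := specRad_lt B s hspos hlt
    exact ⟨s, B, hBnn, hρ, (sub_sub_cancel _ _).symm⟩
  · rintro ⟨s, B, hBnn, hρ, hSeq⟩
    obtain ⟨y, hypos, hy⟩ := exists_pos_mulVec_lt B hBnn s hρ
    have hSy : ∀ i, 0 < S.mulVec y i := by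
      intro i
      rw [hSeq, Matrix.sub_mulVec, Matrix.smul_mulVec, Matrix.one_mulVec]
      simp only [Pi.sub_apply, Pi.smul_apply, smul_eq_mul]
      linarith [hy i]
    rcases Nat.eq_zero_or_pos n with hn | hn
    · subst hn
      exact ⟨fun _ => 1, fun j => one_pos, fun i => i.elim0⟩
    have hne : (Finset.univ : Finset (Fin n)).Nonempty :=
      ⟨⟨0, hn⟩, Finset.mem_univ _⟩
    set δ : ℝ := Finset.univ.inf' hne (fun i => S.mulVec y i) with hδ
    have hδpos : 0 < δ := by
      rw [hδ, Finset.lt_inf'_iff]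
      exact fun i _ => hSy i
    set K : ℝ := 1 + ∑ j ∈ σᶜ, ∑ i, |A i j| with hK
    have hKin : ∀ i, ∑ j ∈ σᶜ, |A i j| ≤ K - 1 := by
      intro i
      rw [hK]
      simp only [add_sub_cancel_left]
      apply Finset.sum_le_sum
      intro j _
      exact Finset.single_le_sum (fun i' _ => abs_nonneg (A i' j)) (Finset.mem_univ i)
    have hKpos : 0 < K := by
      rw [hK]
      have : 0 ≤ ∑ j ∈ σᶜ, ∑ i, |A i j| :=
        Finset.sum_nonneg fun j _ => Finset.sum_nonneg fun i _ => abs_nonneg _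
      linarith
    set ε : ℝ := δ / K with hε
    have hεpos : 0 < ε := div_pos hδpos hKpos
    refine ⟨fun j => if h : j ∈ σ then y (e.symm ⟨j, h⟩) else ε, ?_, ?_⟩
    · intro j
      by_cases h : j ∈ σ
      · simp only [dif_pos h]; exact hypos _
      · simp only [dif_neg h]; exact hεpos
    · intro i
      set x : Fin m → ℝ := fun j => if h : j ∈ σ then y (e.symm ⟨j, h⟩) else ε with hx
      have hsplit : A.mulVec x i = ∑ j ∈ σ, A i j * x j + ∑ j ∈ σᶜ, A i j * x j := by
        rw [Matrix.mulVec, dotProduct, ← Finset.sum_add_sum_compl σ]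
      have hσpart : ∑ j ∈ σ, A i j * x j = S.mulVec y i := by
        rw [← Finset.sum_coe_sort σ (fun j => A i j * x j), Matrix.mulVec, dotProduct]
        refine Fintype.sum_equiv e.symm _ _ ?_
        intro j
        have hxj : x j.1 = y (e.symm j) := by
          rw [hx]; simp only [dif_pos j.2]
        have hAj : (S i (e.symm j) : ℝ) = A i j.1 := by
          have : (e (e.symm j)) = j := e.apply_symm_apply j
          simp [hS, Matrix.submatrix_apply, this]
        rw [hxj, hAj]
      have hcpart : -δ ≤ ∑ j ∈ σᶜ, A i j * x j := by
        have h1 : ∀ j ∈ σᶜ, -( |A i j| * ε) ≤ A i j * x j := by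
          intro j hj
          have hxj : x j = ε := by
            rw [hx]; simp only [dif_neg (Finset.mem_compl.mp hj)]
          rw [hxj]
          have := neg_abs_le (A i j)
          nlinarith [hεpos]
        have h2 : ∑ j ∈ σᶜ, -( |A i j| * ε) ≤ ∑ j ∈ σᶜ, A i j * x j :=
          Finset.sum_le_sum h1
        have h3 : ∑ j ∈ σᶜ, -( |A i j| * ε) = -ε * ∑ j ∈ σᶜ, |A i j| := by
          rw [Finset.mul_sum]
          exact Finset.sum_congr rfl fun j _ => by ring
        have h4 : -ε * ∑ j ∈ σᶜ, |A i j| ≥ -ε * (K - 1) := by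
          have := hKin i
          nlinarith [hεpos]
        have h5 : -ε * (K - 1) ≥ -δ := by
          have hεK : ε * K = δ := by rw [hε]; field_simp
          nlinarith [hεpos]
        linarith [h2, h3 ▸ h2]
      have hδle : δ ≤ S.mulVec y i := Finset.inf'_le _ (Finset.mem_univ i)
      rw [hsplit, hσpart]
      linarith
end

section
/- Let C ⊆ 2^E be a sublattice of 2^E with ∅, E ∈ C, let c(σ) = ⋂ { ν ∈ C : σ ⊆ ν }, and let G_c be the directed graph on E with arcs i → j iff j ∈ c({i}) and i ≠ j. Then C = { σ ⊆ E : N⁺_{G_c}(σ) ⊆ σ }, i.e., C equals the code C(G_c, E) of the graph G_c with uninhibited set all of E. -/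
/-- The closure map of a family `C` of subsets: `c(σ)` is the intersection of all
members of `C` containing `σ`. -/
def latClosure {E : Type*} (C : Set (Set E)) (σ : Set E) : Set E :=
  ⋂₀ {ν | ν ∈ C ∧ σ ⊆ ν}

lemma sUnion_mem_of_finite {E : Type*} (C : Set (Set E))
    (hU : ∀ σ ∈ C, ∀ τ ∈ C, σ ∪ τ ∈ C) (h0 : ∅ ∈ C)
    {S : Set (Set E)} (hfin : S.Finite) (hsub : S ⊆ C) : ⋃₀ S ∈ C := by
  refine Set.Finite.induction_on (motive := fun s _ => s ⊆ C → ⋃₀ s ∈ C) S hfin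
    (fun _ => by simpa using h0) ?_ hsub
  intro a s _ _ ih hsub'
  rw [Set.sUnion_insert]
  exact hU a (hsub' (Set.mem_insert a s)) _ (ih fun x hx => hsub' (Set.mem_insert_of_mem a hx))

lemma sInter_mem_of_finite {E : Type*} (C : Set (Set E))
    (hI : ∀ σ ∈ C, ∀ τ ∈ C, σ ∩ τ ∈ C) (h1 : Set.univ ∈ C)
    {S : Set (Set E)} (hfin : S.Finite) (hsub : S ⊆ C) : ⋂₀ S ∈ C := by
  refine Set.Finite.induction_on (motive := fun s _ => s ⊆ C → ⋂₀ s ∈ C) S hfin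
    (fun _ => by simpa using h1) ?_ hsub
  intro a s _ _ ih hsub'
  rw [Set.sInter_insert]
  exact hI a (hsub' (Set.mem_insert a s)) _ (ih fun x hx => hsub' (Set.mem_insert_of_mem a hx))

/-- for a sublattice `C ⊆ 2^E` with `∅, E ∈ C` and the digraph `G_c` with
arcs `i → j ↔ j ∈ c({i}) ∧ i ≠ j`, one has `C = { σ : N⁺_{G_c}(σ) ⊆ σ }`. -/
theorem lattice_eq_code_of_graph {E : Type*} [Fintype E] (C : Set (Set E))
    (hU : ∀ σ ∈ C, ∀ τ ∈ C, σ ∪ τ ∈ C) (hI : ∀ σ ∈ C, ∀ τ ∈ C, σ ∩ τ ∈ C)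
    (h0 : ∅ ∈ C) (h1 : Set.univ ∈ C) :
    C = {σ : Set E | {j | ∃ i ∈ σ, j ∈ latClosure C {i} ∧ i ≠ j} ⊆ σ} := by
  have hclos : ∀ τ : Set E, latClosure C τ ∈ C := fun τ =>
    sInter_mem_of_finite C hI h1 (Set.toFinite _) (fun ν hν => hν.1)
  have hmem : ∀ i : E, i ∈ latClosure C {i} := fun i ν hν =>
    hν.2 (Set.mem_singleton i)
  ext σ
  constructor
  · intro hσ j hj
    obtain ⟨i, hi, hji, _⟩ := hj
    exact hji σ ⟨hσ, Set.singleton_subset_iff.mpr hi⟩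
  · intro hσ
    have key : σ = ⋃₀ ((fun i => latClosure C {i}) '' σ) := by
      ext j
      constructor
      · intro hj
        exact ⟨latClosure C {j}, ⟨j, hj, rfl⟩, hmem j⟩
      · rintro ⟨_, ⟨i, hi, rfl⟩, hj⟩
        by_cases h : i = j
        · exact h ▸ hi
        · exact hσ ⟨i, hi, hj, h⟩
    rw [key]
    exact sUnion_mem_of_finite C hU h0 (Set.toFinite _)
      (fun ν hν => by obtain ⟨i, _, rfl⟩ := hν; exact hclos _)
end

section
/- Let W be an n×n Dale matrix with excitatory neurons E, inhibitory neurons I, satisfying the Ground Assumption that (I − W)_σ is nonsingular for every nonempty σ ⊆ [n]. If σ ⊆ E and τ ⊆ I are such that σ ⊔ τ is the support of a fixed point of the threshold-linear network for some nonnegative input b (i.e., σ ⊔ τ ∈ FP(W)), then for every τ' with τ ⊆ τ' ⊆ I, σ ⊔ τ' ∈ FP(W). -/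
open Matrix BigOperators

/-- `W` is a Dale matrix with excitatory neurons `Exc`: zero diagonal, columns of
excitatory neurons entrywise nonnegative, columns of inhibitory neurons (the complement
of `Exc`) entrywise nonpositive. -/
def IsDale {n : ℕ} (W : Matrix (Fin n) (Fin n) ℝ) (Exc : Finset (Fin n)) : Prop :=
  (∀ i, W i i = 0) ∧ (∀ j ∈ Exc, ∀ i, 0 ≤ W i j) ∧ (∀ j ∉ Exc, ∀ i, W i j ≤ 0)

/-- The Ground Assumption: every principal submatrix `(I - W)_σ`, for nonempty
`σ ⊆ [n]`, is nonsingular. -/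
def GroundAssumption {n : ℕ} (W : Matrix (Fin n) (Fin n) ℝ) : Prop :=
  ∀ σ : Finset (Fin n), σ.Nonempty →
    (((1 : Matrix (Fin n) (Fin n) ℝ) - W).submatrix
      (Subtype.val : {i // i ∈ σ} → Fin n) Subtype.val).det ≠ 0

/-- `x` is a fixed point of the threshold-linear dynamics
`ẋᵢ = -xᵢ + [∑ⱼ Wᵢⱼ xⱼ + bᵢ]₊`, i.e. `x = [Wx + b]₊`. -/
def IsFixedPt {n : ℕ} (W : Matrix (Fin n) (Fin n) ℝ) (b x : Fin n → ℝ) : Prop :=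
  ∀ i, x i = max 0 (W.mulVec x i + b i)

/-- `ν ∈ FP(W)`: `ν` is the support of a fixed point of the threshold-linear network
for some nonnegative input `b`. -/
def memFP {n : ℕ} (W : Matrix (Fin n) (Fin n) ℝ) (ν : Set (Fin n)) : Prop :=
  ∃ b x : Fin n → ℝ, (∀ i, 0 ≤ b i) ∧ IsFixedPt W b x ∧ {i | 0 < x i} = ν

/-- `σ ∈ C(W)`: `σ` is the excitatory support of a fixed point of the threshold-linear
network for some nonnegative input `b`. -/
def memCode {n : ℕ} (W : Matrix (Fin n) (Fin n) ℝ) (Exc : Finset (Fin n))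
    (σ : Set (Fin n)) : Prop :=
  ∃ b x : Fin n → ℝ, (∀ i, 0 ≤ b i) ∧ IsFixedPt W b x ∧ {i | i ∈ Exc ∧ 0 < x i} = σ

/-- if `σ ⊔ τ ∈ FP(W)` for `σ` excitatory and `τ` inhibitory, then
`σ ⊔ τ' ∈ FP(W)` for every `τ ⊆ τ' ⊆ I`. -/
theorem fp_upward_closed_in_inhibitory {n : ℕ} (W : Matrix (Fin n) (Fin n) ℝ)
    (Exc : Finset (Fin n)) (hD : IsDale W Exc) (hGA : GroundAssumption W)
    (σ τ : Set (Fin n)) (hσ : σ ⊆ ↑Exc) (hτ : τ ⊆ ↑(Excᶜ))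
    (h : memFP W (σ ∪ τ)) :
    ∀ τ' : Set (Fin n), τ ⊆ τ' → τ' ⊆ ↑(Excᶜ) → memFP W (σ ∪ τ') := by
  classical
  intro τ' hττ' hτ'I
  obtain ⟨b, x, hb, hfix, hsupp⟩ := h
  have hxnonneg : ∀ i, 0 ≤ x i := fun i => (hfix i).symm ▸ le_max_left 0 _
  have hmem : ∀ i, i ∈ σ ∪ τ ↔ 0 < x i := by
    intro i; rw [← hsupp]; rfl
  have hx0 : ∀ i, i ∉ σ ∪ τ → x i = 0 := by
    intro i hi
    have := hxnonneg i
    have h2 : ¬ 0 < x i := fun hp => hi ((hmem i).mpr hp)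
    linarith
  have hfixed_on : ∀ i, i ∈ σ ∪ τ → x i = W.mulVec x i + b i := by
    intro i hi
    have hpos : 0 < x i := (hmem i).mp hi
    have heq := hfix i
    rcases lt_max_iff.mp (heq ▸ hpos) with h1 | h1
    · exact absurd h1 (lt_irrefl 0)
    · rw [heq, max_eq_right h1.le]
  have hsilent : ∀ i, i ∉ σ ∪ τ → W.mulVec x i + b i ≤ 0 := by
    intro i hi
    have heq := hfix i
    rw [hx0 i hi] at heq
    exact max_eq_left_iff.mp heq.symm
  set δ : Fin n → ℝ := fun j => if j ∈ τ' ∧ j ∉ τ then 1 else 0 with hδ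
  have hδ0 : ∀ i, i ∈ σ ∪ τ → δ i = 0 := by
    intro i hi
    rcases hi with hi | hi
    · have hiE : i ∈ Exc := hσ hi
      have : i ∉ τ' := fun hc => (Finset.mem_compl.mp (hτ'I hc)) hiE
      simp [hδ, this]
    · simp [hδ, hi]
  have hδnonneg : ∀ i, 0 ≤ δ i := by
    intro i; simp only [hδ]; split <;> norm_num
  set x' : Fin n → ℝ := fun i => x i + δ i with hx'
  have hmul : ∀ i, W.mulVec x' i = W.mulVec x i + ∑ j, W i j * δ j := by
    intro i
    simp [hx', Matrix.mulVec, dotProduct, mul_add, Finset.sum_add_distrib]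
  have hs_nonpos : ∀ i, (∑ j, W i j * δ j) ≤ 0 := by
    intro i
    apply Finset.sum_nonpos
    intro j _
    by_cases hj : j ∈ τ' ∧ j ∉ τ
    · have hjI : j ∉ Exc := Finset.mem_compl.mp (hτ'I hj.1)
      have := hD.2.2 j hjI i
      simp only [hδ, if_pos hj, mul_one]
      exact this
    · simp [hδ, hj]
  set b' : Fin n → ℝ := fun i => if i ∈ σ ∪ τ' then x' i - W.mulVec x' i else b i with hb'
  have hsub : σ ∪ τ ⊆ σ ∪ τ' := Set.union_subset_union_right σ hττ'
  have hx'pos : ∀ i, i ∈ σ ∪ τ' → 0 < x' i := by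
    intro i hi
    by_cases hiν : i ∈ σ ∪ τ
    · have := (hmem i).mp hiν
      have := hδnonneg i
      simp only [hx']; linarith
    · have hiδ : i ∈ τ' ∧ i ∉ τ := by
        rcases hi with hi | hi
        · exact absurd (Or.inl hi) hiν
        · exact ⟨hi, fun hc => hiν (Or.inr hc)⟩
      have : δ i = 1 := by simp [hδ, hiδ]
      have := hxnonneg i
      simp only [hx']; rw [‹δ i = 1›]; linarith
  have hx'0 : ∀ i, i ∉ σ ∪ τ' → x' i = 0 := by
    intro i hi
    have h1 : x i = 0 := hx0 i (fun hc => hi (hsub hc))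
    have h2 : δ i = 0 := by
      have : i ∉ τ' := fun hc => hi (Or.inr hc)
      simp [hδ, this]
    simp [hx', h1, h2]
  refine ⟨b', x', ?_, ?_, ?_⟩
  · intro i
    by_cases hi : i ∈ σ ∪ τ'
    · simp only [hb', if_pos hi]
      rw [hmul i]
      by_cases hiν : i ∈ σ ∪ τ
      · have heq := hfixed_on i hiν
        have hd0 := hδ0 i hiν
        have hs := hs_nonpos i
        have hbi := hb i
        simp only [hx', hd0, add_zero]
        linarith [heq]
      · have hiδ : i ∈ τ' ∧ i ∉ τ := by
          rcases hi with hi | hi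
          · exact absurd (Or.inl hi) hiν
          · exact ⟨hi, fun hc => hiν (Or.inr hc)⟩
        have hd1 : δ i = 1 := by simp [hδ, hiδ]
        have hsl := hsilent i hiν
        have hbi := hb i
        have hs := hs_nonpos i
        have hxi : x i = 0 := hx0 i hiν
        simp only [hx', hd1, hxi]
        linarith
    · simp only [hb', if_neg hi]
      exact hb i
  · intro i
    by_cases hi : i ∈ σ ∪ τ'
    · simp only [hb', if_pos hi]
      have := hx'pos i hi
      rw [show W.mulVec x' i + (x' i - W.mulVec x' i) = x' i by ring]
      rw [max_eq_right this.le]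
    · simp only [hb', if_neg hi]
      have hiν : i ∉ σ ∪ τ := fun hc => hi (hsub hc)
      rw [hx'0 i hi, hmul i]
      have hsl := hsilent i hiν
      have hs := hs_nonpos i
      symm
      rw [max_eq_left]
      linarith
  · ext i
    simp only [Set.mem_setOf_eq]
    constructor
    · intro hp
      by_contra hc
      rw [hx'0 i hc] at hp
      exact lt_irrefl 0 hp
    · exact hx'pos i
end

section
/- Let W be an n×n Dale matrix satisfying the Ground Assumption. Then a subset σ of excitatory neurons lies in the combinatorial code C(W) (i.e., σ is the excitatory support of some fixed point for some nonnegative input) if and only if σ ⊔ I ∈ FP(W), where I is the full set of inhibitory neurons. -/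
open Matrix BigOperators

/-- `σ ⊆ E` lies in the combinatorial code `C(W)` iff `σ ⊔ I ∈ FP(W)`,
where `I = Excᶜ` is the full set of inhibitory neurons. -/
theorem code_iff_full_inhibition {n : ℕ} (W : Matrix (Fin n) (Fin n) ℝ)
    (Exc : Finset (Fin n)) (hD : IsDale W Exc) (hGA : GroundAssumption W)
    (σ : Set (Fin n)) (hσ : σ ⊆ ↑Exc) :
    memCode W Exc σ ↔ memFP W (σ ∪ ↑(Excᶜ)) := by
  classical
  obtain ⟨hdiag, hE, hI⟩ := hD
  constructor
  · rintro ⟨b, x, hb, hfp, hsupp⟩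
    obtain ⟨t, ht⟩ : ∃ t : Fin n → ℝ, ∀ j, t j = if j ∈ Exc then 0 else 1 :=
      ⟨_, fun _ => rfl⟩
    obtain ⟨x', hx'⟩ : ∃ x' : Fin n → ℝ, ∀ j, x' j = x j + t j :=
      ⟨_, fun _ => rfl⟩
    have hxnn : ∀ i, 0 ≤ x i := by
      intro i; rw [hfp i]; exact le_max_left 0 _
    have htnn : ∀ i, 0 ≤ t i := by
      intro i; rw [ht i]; split <;> norm_num
    have hx'nn : ∀ i, 0 ≤ x' i := by
      intro i; rw [hx' i]; exact add_nonneg (hxnn i) (htnn i)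
    have hS : ∀ i, (∑ j, W i j * t j) ≤ 0 := by
      intro i
      apply Finset.sum_nonpos
      intro j _
      rw [ht j]
      split
      · simp
      · next h => simpa using hI j h i
    have hmv : ∀ i, W.mulVec x' i = W.mulVec x i + ∑ j, W i j * t j := by
      intro i
      simp only [Matrix.mulVec, dotProduct]
      rw [← Finset.sum_add_distrib]
      refine Finset.sum_congr rfl fun j _ => ?_
      rw [hx' j]; ring
    have hact : ∀ i, 0 < x i → W.mulVec x i + b i = x i := by
      intro i hxi
      have h := hfp i
      rcases le_or_gt (W.mulVec x i + b i) 0 with hc | hc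
      · rw [max_eq_left hc] at h; linarith
      · rw [max_eq_right hc.le] at h; linarith
    have hinact : ∀ i, x i = 0 → W.mulVec x i ≤ 0 := by
      intro i hxi
      have h := hfp i
      rcases le_or_gt (W.mulVec x i + b i) 0 with hc | hc
      · have := hb i; linarith
      · rw [max_eq_right hc.le] at h; linarith
    have hmvle : ∀ i, W.mulVec x' i ≤ x' i := by
      intro i
      rw [hmv i, hx' i]
      rcases (hxnn i).lt_or_eq with hxi | hxi
      · have h1 := hact i hxi
        have h2 := hS i
        have h3 := hb i
        have h4 := htnn i
        linarith
      · have h1 := hinact i hxi.symm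
        have h2 := hS i
        have h4 := htnn i
        linarith
    refine ⟨fun i => if 0 < x' i then x' i - W.mulVec x' i else 0, x', ?_, ?_, ?_⟩
    · intro i
      dsimp only
      split
      · linarith [hmvle i]
      · exact le_refl 0
    · intro i
      dsimp only
      split
      · next h =>
        have heq : W.mulVec x' i + (x' i - W.mulVec x' i) = x' i := by ring
        rw [heq, max_eq_right (hx'nn i)]
      · next h =>
        have hx0 : x' i = 0 := le_antisymm (not_lt.mp h) (hx'nn i)
        have hxi : x i = 0 := by
          have h4 := htnn i
          have h5 := hxnn i
          have h6 := hx' i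
          linarith
        have hle : W.mulVec x' i + 0 ≤ 0 := by
          rw [hmv i]
          linarith [hinact i hxi, hS i]
        rw [max_eq_left hle, hx0]
    · ext i
      simp only [Set.mem_setOf_eq, Set.mem_union, Finset.coe_compl,
        Set.mem_compl_iff, Finset.mem_coe, ← hsupp]
      constructor
      · intro hi
        by_cases hiE : i ∈ Exc
        · left
          refine ⟨hiE, ?_⟩
          have ht0 : t i = 0 := by rw [ht i]; simp [hiE]
          rw [hx' i] at hi
          linarith
        · right; exact hiE
      · intro hi
        rw [hx' i]
        rcases hi with ⟨hiE, hxi⟩ | hiI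
        · have := htnn i
          linarith
        · have ht1 : t i = 1 := by rw [ht i]; simp [hiI]
          have := hxnn i
          linarith
  · rintro ⟨b, x, hb, hfp, hsupp⟩
    refine ⟨b, x, hb, hfp, ?_⟩
    ext i
    simp only [Set.mem_setOf_eq]
    constructor
    · rintro ⟨hiE, hxi⟩
      have hmem : i ∈ σ ∪ ↑(Excᶜ) := by rw [← hsupp]; exact hxi
      rcases hmem with h | h
      · exact h
      · exact absurd hiE (by simpa using h)
    · intro hiσ
      have h1 : i ∈ Exc := hσ hiσ
      have h2 : i ∈ {i | 0 < x i} := by rw [hsupp]; exact Or.inl hiσ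
      exact ⟨h1, h2⟩
end

section
/- Let W be a Dale matrix satisfying the Ground Assumption, with excitatory neurons E, inhibited excitatory neurons E_I (those receiving inhibition), uninhibited excitatory neurons E_U = E \ E_I, and excitatory connectivity graph G_E (arc i → j iff W_{ji} > 0 for i ≠ j ∈ E). Then a nonempty σ ⊆ E is in the combinatorial code C(W) if and only if (i) ρ(W_{E_U ∩ σ}) < 1 and (ii) N⁺_{G_E}(σ) ∩ E_U ⊆ σ. -/
open Matrix

open Matrix BigOperators

open scoped Classical

/-- The uninhibited excitatory neurons: those `j ∈ E` with `W j i = 0` for every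
inhibitory neuron `i`. -/
noncomputable def uninhibited {n : ℕ} (W : Matrix (Fin n) (Fin n) ℝ)
    (Exc : Finset (Fin n)) : Finset (Fin n) :=
  Exc.filter (fun j => ∀ i ∉ Exc, W j i = 0)


open Filter
open scoped ENNReal NNReal

section AuxLemmas
set_option linter.unusedSectionVars false
variable {m : Type*} [Fintype m] [DecidableEq m]

lemma aux_spec_iff (M : Matrix m m ℂ) (μ : ℂ) :
    μ ∈ spectrum ℂ M ↔ ∃ v, v ≠ 0 ∧ M.mulVec v = μ • v := by
  rw [spectrum.mem_iff, Matrix.isUnit_iff_isUnit_det, isUnit_iff_ne_zero, not_not,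
    ← Matrix.exists_mulVec_eq_zero_iff]
  have halg : (algebraMap ℂ (Matrix m m ℂ)) μ = μ • (1 : Matrix m m ℂ) := by
    rw [Algebra.algebraMap_eq_smul_one]
  constructor
  · rintro ⟨v, hv, h⟩
    refine ⟨v, hv, ?_⟩
    rw [halg, Matrix.sub_mulVec, Matrix.smul_mulVec, Matrix.one_mulVec] at h
    have := sub_eq_zero.mp h
    rw [← this]
  · rintro ⟨v, hv, h⟩
    refine ⟨v, hv, ?_⟩
    rw [halg, Matrix.sub_mulVec, Matrix.smul_mulVec, Matrix.one_mulVec, h, sub_self]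

lemma aux_bddAbove (A : Matrix m m ℝ) :
    BddAbove {r : ℝ | ∃ μ ∈ spectrum ℂ (A.map Complex.ofReal), r = ‖μ‖} := by
  apply Set.Finite.bddAbove
  have : {r : ℝ | ∃ μ ∈ spectrum ℂ (A.map Complex.ofReal), r = ‖μ‖}
      = (fun μ => ‖μ‖) '' (spectrum ℂ (A.map Complex.ofReal)) := by
    ext r; simp [eq_comm, Set.mem_image]
  rw [this]
  exact (Matrix.finite_spectrum _).image _

lemma aux_norm_le_specRad (A : Matrix m m ℝ) {μ : ℂ}
    (hμ : μ ∈ spectrum ℂ (A.map Complex.ofReal)) : ‖μ‖ ≤ specRad A :=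
  le_csSup (aux_bddAbove A) ⟨μ, hμ, rfl⟩

lemma aux_specRad_lt_one (A : Matrix m m ℝ)
    (h : ∀ μ ∈ spectrum ℂ (A.map Complex.ofReal), ‖μ‖ < 1) : specRad A < 1 := by
  set T := {r : ℝ | ∃ μ ∈ spectrum ℂ (A.map Complex.ofReal), r = ‖μ‖} with hT
  have hfin : T.Finite := by
    have : T = (fun μ => ‖μ‖) '' (spectrum ℂ (A.map Complex.ofReal)) := by
      ext r; simp [hT, eq_comm, Set.mem_image]
    rw [this]
    exact (Matrix.finite_spectrum _).image _
  rcases T.eq_empty_or_nonempty with he | hne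
  · rw [specRad, ← hT, he, Real.sSup_empty]; norm_num
  · have := hne.csSup_mem hfin
    rw [specRad, ← hT]
    obtain ⟨μ, hμ, hr⟩ := this
    rw [hr]
    exact h μ hμ

lemma aux_mulVec_apply (A : Matrix m m ℝ) (x : m → ℝ) (i : m) :
    A.mulVec x i = ∑ j, A i j * x j := rfl

lemma aux_subinvariant (A : Matrix m m ℝ) (hA : ∀ i j, 0 ≤ A i j)
    (x : m → ℝ) (hx : ∀ i, 0 < x i) (hAx : ∀ i, A.mulVec x i ≤ x i)
    (hdet : ∀ S : Finset m, S.Nonempty →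
      (((1 : Matrix m m ℝ) - A).submatrix
        (Subtype.val : {i // i ∈ S} → m) Subtype.val).det ≠ 0) :
    specRad A < 1 := by
  apply aux_specRad_lt_one
  intro μ hμ
  by_contra hge
  push_neg at hge
  obtain ⟨v, hv0, hv⟩ := (aux_spec_iff _ μ).mp hμ
  obtain ⟨j₀, hj₀⟩ := Function.ne_iff.mp hv0
  have hmne : Nonempty m := ⟨j₀⟩
  obtain ⟨i₀, -, hi₀⟩ := Finset.exists_max_image Finset.univ
    (fun i => ‖v i‖ / x i) ⟨j₀, Finset.mem_univ _⟩
  set c : ℝ := ‖v i₀‖ / x i₀ with hc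
  have hcle : ∀ i, ‖v i‖ ≤ c * x i := by
    intro i
    have := hi₀ i (Finset.mem_univ _)
    calc ‖v i‖ = (‖v i‖ / x i) * x i := (div_mul_cancel₀ _ (hx i).ne').symm
    _ ≤ c * x i := mul_le_mul_of_nonneg_right this (hx i).le
  have hcpos : 0 < c := by
    have hj₀' : v j₀ ≠ 0 := hj₀
    have h1 : 0 < ‖v j₀‖ / x j₀ := div_pos (norm_pos_iff.mpr hj₀') (hx j₀)
    exact lt_of_lt_of_le h1 (hi₀ j₀ (Finset.mem_univ _))
  set S : Finset m := Finset.univ.filter (fun i => c * x i ≤ ‖v i‖) with hSdef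
  have hmemS : ∀ i, i ∈ S ↔ ‖v i‖ = c * x i := by
    intro i
    simp only [hSdef, Finset.mem_filter, Finset.mem_univ, true_and]
    exact ⟨fun h => le_antisymm (hcle i) h, fun h => h.ge⟩
  have hi₀S : i₀ ∈ S := by
    rw [hmemS]
    rw [hc, div_mul_cancel₀ _ (hx i₀).ne']
  -- the eigen-equation componentwise
  have heig : ∀ i, ‖μ‖ * ‖v i‖ ≤ ∑ j, A i j * ‖v j‖ := by
    intro i
    have : (A.map Complex.ofReal).mulVec v i = μ * v i := by
      rw [hv]; rfl
    have hnorm : ‖μ‖ * ‖v i‖ = ‖∑ j, (Complex.ofReal (A i j)) * v j‖ := by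
      rw [← norm_mul, ← this]; rfl
    rw [hnorm]
    refine (norm_sum_le _ _).trans (le_of_eq ?_)
    apply Finset.sum_congr rfl
    intro j _
    rw [norm_mul, Complex.norm_real, Real.norm_of_nonneg (hA i j)]
  -- key equalities on S
  have key : ∀ i ∈ S, (∀ j, A i j * ‖v j‖ = A i j * (c * x j)) ∧ ∑ j, A i j * x j = x i := by
    intro i hiS
    have hvi : ‖v i‖ = c * x i := (hmemS i).mp hiS
    have h1 : c * x i ≤ ∑ j, A i j * ‖v j‖ := by
      calc c * x i = ‖v i‖ := hvi.symm
      _ ≤ ‖μ‖ * ‖v i‖ := le_mul_of_one_le_left (norm_nonneg _) hge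
      _ ≤ ∑ j, A i j * ‖v j‖ := heig i
    have h2 : ∀ j, A i j * ‖v j‖ ≤ A i j * (c * x j) := fun j =>
      mul_le_mul_of_nonneg_left (hcle j) (hA i j)
    have h3 : ∑ j, A i j * (c * x j) ≤ c * x i := by
      have : ∑ j, A i j * (c * x j) = c * (A.mulVec x i) := by
        rw [aux_mulVec_apply, Finset.mul_sum]
        exact Finset.sum_congr rfl fun j _ => by ring
      rw [this]
      exact mul_le_mul_of_nonneg_left (hAx i) hcpos.le
    have hsum_le : ∑ j, A i j * ‖v j‖ ≤ ∑ j, A i j * (c * x j) :=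
      Finset.sum_le_sum fun j _ => h2 j
    have heq1 : ∑ j, A i j * ‖v j‖ = ∑ j, A i j * (c * x j) :=
      le_antisymm hsum_le (by linarith)
    have heq2 : ∑ j, A i j * (c * x j) = c * x i := le_antisymm h3 (by linarith)
    constructor
    · exact fun j => ((Finset.sum_eq_sum_iff_of_le (fun j _ => h2 j)).mp heq1) j
        (Finset.mem_univ j)
    · have : c * (∑ j, A i j * x j) = c * x i := by
        rw [← heq2, Finset.mul_sum]
        exact Finset.sum_congr rfl fun j _ => by ring
      exact mul_left_cancel₀ hcpos.ne' this
  -- entries into the complement of S vanish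
  have hvanish : ∀ i ∈ S, ∀ j, j ∉ S → A i j = 0 := by
    intro i hiS j hjS
    have h2 := (key i hiS).1 j
    have hlt : ‖v j‖ < c * x j := by
      rcases lt_or_eq_of_le (hcle j) with h | h
      · exact h
      · exact absurd ((hmemS j).mpr h) hjS
    by_contra hA0
    have hApos : 0 < A i j := lt_of_le_of_ne (hA i j) (Ne.symm hA0)
    have := mul_lt_mul_of_pos_left hlt hApos
    rw [h2] at this
    exact lt_irrefl _ this
  -- build singular principal submatrix
  have hSne : S.Nonempty := ⟨i₀, hi₀S⟩
  apply hdet S hSne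
  rw [← Matrix.exists_mulVec_eq_zero_iff]
  refine ⟨fun j => x j.val, ?_, ?_⟩
  · intro h0
    have := congrFun h0 ⟨i₀, hi₀S⟩
    exact (hx i₀).ne' this
  · funext i
    have hiS : i.val ∈ S := i.prop
    have hsum : ∑ j ∈ S, A i.val j * x j = x i.val := by
      rw [← (key i.val hiS).2]
      apply Finset.sum_subset (Finset.subset_univ S)
      intro j _ hjS
      rw [hvanish i.val hiS j hjS, zero_mul]
    have : (((1 : Matrix m m ℝ) - A).submatrix
        (Subtype.val : {i // i ∈ S} → m)
        (Subtype.val : {i // i ∈ S} → m)).mulVec (fun j => x j.val) i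
        = x i.val - ∑ j ∈ S, A i.val j * x j := by
      calc (((1 : Matrix m m ℝ) - A).submatrix
          (Subtype.val : {i // i ∈ S} → m)
          (Subtype.val : {i // i ∈ S} → m)).mulVec (fun j => x j.val) i
          = ∑ j : {k // k ∈ S}, ((1 : Matrix m m ℝ) - A) i.val j.val * x j.val := rfl
      _ = ∑ j ∈ S, ((1 : Matrix m m ℝ) - A) i.val j * x j :=
          Finset.sum_coe_sort S (fun j => ((1 : Matrix m m ℝ) - A) i.val j * x j)
      _ = ∑ j ∈ S, ((if i.val = j then x j else 0) - A i.val j * x j) := by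
          apply Finset.sum_congr rfl
          intro j _
          rw [Matrix.sub_apply, Matrix.one_apply]
          split <;> ring
      _ = (∑ j ∈ S, if i.val = j then x j else 0) - ∑ j ∈ S, A i.val j * x j :=
          Finset.sum_sub_distrib _ _
      _ = x i.val - ∑ j ∈ S, A i.val j * x j := by
          rw [Finset.sum_ite_eq S i.val x, if_pos hiS]
    rw [this, hsum, sub_self]
    rfl

lemma aux_pow_nonneg (A : Matrix m m ℝ) (hA : ∀ i j, 0 ≤ A i j) (k : ℕ) :
    ∀ i j, 0 ≤ (A ^ k) i j := by
  induction k with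
  | zero =>
    intro i j
    rw [pow_zero, Matrix.one_apply]
    split <;> norm_num
  | succ k ih =>
    intro i j
    rw [pow_succ, Matrix.mul_apply]
    exact Finset.sum_nonneg fun l _ => mul_nonneg (ih i l) (hA l j)

lemma aux_map_pow (A : Matrix m m ℝ) (k : ℕ) :
    (A.map Complex.ofReal) ^ k = (A ^ k).map Complex.ofReal := by
  have h : ∀ B : Matrix m m ℝ, B.map Complex.ofReal
      = (algebraMap ℝ ℂ).mapMatrix B := fun B => rfl
  rw [h, h, ← map_pow]

lemma aux_exists_pos_mulVec_lt (A : Matrix m m ℝ) (hA : ∀ i j, 0 ≤ A i j)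
    (h : specRad A < 1) :
    ∃ x : m → ℝ, (∀ i, 0 < x i) ∧ ∀ i, A.mulVec x i < x i := by
  rcases isEmpty_or_nonempty m with hm | hm
  · exact ⟨fun _ => 1, fun i => isEmptyElim i, fun i => isEmptyElim i⟩
  letI : NormedRing (Matrix m m ℂ) := Matrix.linftyOpNormedRing
  letI : NormedAlgebra ℂ (Matrix m m ℂ) := Matrix.linftyOpNormedAlgebra
  haveI : CompleteSpace (Matrix m m ℂ) := FiniteDimensional.complete ℂ _
  set A' := A.map Complex.ofReal with hA'
  have hρ : spectralRadius ℂ A' < 1 := by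
    rw [spectralRadius]
    refine lt_of_le_of_lt (iSup₂_le fun μ hμ => ?_) (ENNReal.ofReal_lt_one.mpr h)
    rw [show ((‖μ‖₊ : ℝ≥0) : ℝ≥0∞) = ENNReal.ofReal ‖μ‖ from (ENNReal.ofReal_eq_coe_nnreal (norm_nonneg μ)).symm]
    exact ENNReal.ofReal_le_ofReal (aux_norm_le_specRad A hμ)
  have htend := spectrum.pow_nnnorm_pow_one_div_tendsto_nhds_spectralRadius A'
  have hev : ∀ᶠ k : ℕ in atTop, ((‖A' ^ k‖₊ : ℝ≥0∞) ^ (1 / (k : ℝ))) < 1 :=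
    htend.eventually_lt_const hρ
  obtain ⟨k, hk1, hk⟩ := ((eventually_ge_atTop 1).and hev).exists
  have hkpos : (0:ℝ) < 1 / (k : ℝ) := by positivity
  have hnn : (‖A' ^ k‖₊ : ℝ≥0∞) < 1 := by
    by_contra hcon
    push_neg at hcon
    have : (1 : ℝ≥0∞) ≤ (‖A' ^ k‖₊ : ℝ≥0∞) ^ (1 / (k:ℝ)) := by
      calc (1:ℝ≥0∞) = 1 ^ (1/(k:ℝ)) := (ENNReal.one_rpow _).symm
      _ ≤ (‖A' ^ k‖₊ : ℝ≥0∞) ^ (1 / (k:ℝ)) := ENNReal.rpow_le_rpow hcon hkpos.le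
    exact absurd hk (not_lt.mpr this)
  have hnorm : ‖A' ^ k‖ < 1 := by
    have := ENNReal.coe_lt_one_iff.mp hnn
    exact this
  -- row sums of A^k are < 1
  have hrow : ∀ i, (A ^ k).mulVec (fun _ => (1:ℝ)) i < 1 := by
    intro i
    have h1 : ∑ j, ‖(A' ^ k) i j‖₊ ≤ ‖A' ^ k‖₊ := by
      rw [Matrix.linfty_opNNNorm_def]
      exact Finset.le_sup (f := fun i => ∑ j, ‖(A' ^ k) i j‖₊) (Finset.mem_univ i)
    have h2 : ((∑ j, ‖(A' ^ k) i j‖₊ : ℝ≥0) : ℝ) ≤ ‖A' ^ k‖ := h1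
    have h3 : (A ^ k).mulVec (fun _ => (1:ℝ)) i = ∑ j, (A ^ k) i j := by
      rw [aux_mulVec_apply]
      exact Finset.sum_congr rfl fun j _ => mul_one _
    have h4 : ∑ j, (A ^ k) i j = ((∑ j, ‖(A' ^ k) i j‖₊ : ℝ≥0) : ℝ) := by
      rw [NNReal.coe_sum]
      apply Finset.sum_congr rfl
      intro j _
      rw [hA', aux_map_pow, Matrix.map_apply, coe_nnnorm, Complex.norm_real,
        Real.norm_of_nonneg (aux_pow_nonneg A hA k i j)]
    rw [h3, h4]
    exact lt_of_le_of_lt h2 hnorm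
  -- Neumann sum
  refine ⟨fun i => ∑ j ∈ Finset.range k, (A ^ j).mulVec (fun _ => (1:ℝ)) i, ?_, ?_⟩
  · intro i
    have h0 : (A ^ 0).mulVec (fun _ => (1:ℝ)) i = 1 := by
      rw [pow_zero, Matrix.one_mulVec]
    have hnonneg : ∀ j : ℕ, 0 ≤ (A ^ j).mulVec (fun _ => (1:ℝ)) i := by
      intro j
      rw [aux_mulVec_apply]
      exact Finset.sum_nonneg fun l _ => by simpa using (aux_pow_nonneg A hA j i l)
    have : (1:ℝ) ≤ ∑ j ∈ Finset.range k, (A ^ j).mulVec (fun _ => (1:ℝ)) i := by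
      calc (1:ℝ) = (A ^ 0).mulVec (fun _ => (1:ℝ)) i := h0.symm
      _ ≤ ∑ j ∈ Finset.range k, (A ^ j).mulVec (fun _ => (1:ℝ)) i :=
        Finset.single_le_sum (fun j _ => hnonneg j) (Finset.mem_range.mpr hk1)
    linarith
  · intro i
    have hswap : A.mulVec (fun i => ∑ j ∈ Finset.range k,
        (A ^ j).mulVec (fun _ => (1:ℝ)) i) i
        = ∑ j ∈ Finset.range k, (A ^ (j+1)).mulVec (fun _ => (1:ℝ)) i := by
      rw [aux_mulVec_apply]
      have : ∀ l, ∑ j ∈ Finset.range k, (A ^ j).mulVec (fun _ => (1:ℝ)) l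
          = ∑ j ∈ Finset.range k, ((A ^ j).mulVec (fun _ => (1:ℝ))) l := fun l => rfl
      calc ∑ l, A i l * ∑ j ∈ Finset.range k, (A ^ j).mulVec (fun _ => (1:ℝ)) l
          = ∑ l, ∑ j ∈ Finset.range k, A i l * (A ^ j).mulVec (fun _ => (1:ℝ)) l := by
            exact Finset.sum_congr rfl fun l _ => Finset.mul_sum _ _ _
      _ = ∑ j ∈ Finset.range k, ∑ l, A i l * (A ^ j).mulVec (fun _ => (1:ℝ)) l :=
            Finset.sum_comm
      _ = ∑ j ∈ Finset.range k, (A ^ (j+1)).mulVec (fun _ => (1:ℝ)) i := by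
            apply Finset.sum_congr rfl
            intro j _
            rw [← aux_mulVec_apply, Matrix.mulVec_mulVec, ← pow_succ']
    rw [hswap]
    have hshift : ∑ j ∈ Finset.range k, (A ^ (j+1)).mulVec (fun _ => (1:ℝ)) i
        = ∑ j ∈ Finset.range k, (A ^ j).mulVec (fun _ => (1:ℝ)) i
          + (A ^ k).mulVec (fun _ => (1:ℝ)) i
          - (A ^ 0).mulVec (fun _ => (1:ℝ)) i := by
      have := Finset.sum_range_succ' (fun j => (A ^ j).mulVec (fun _ => (1:ℝ)) i) k
      rw [Finset.sum_range_succ (fun j => (A ^ j).mulVec (fun _ => (1:ℝ)) i) k] at this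
      linarith
    rw [hshift, pow_zero, Matrix.one_mulVec]
    have := hrow i
    linarith

lemma aux_exists_pos_mul_lt {ι : Type*} (s : Finset ι) (g c : ι → ℝ)
    (hg : ∀ i ∈ s, 0 < g i) (hc : ∀ i ∈ s, 0 ≤ c i) :
    ∃ δ : ℝ, 0 < δ ∧ ∀ i ∈ s, δ * c i < g i := by
  rcases s.eq_empty_or_nonempty with rfl | hs
  · exact ⟨1, one_pos, by simp⟩
  obtain ⟨i₀, hi₀s, hi₀⟩ := Finset.exists_min_image s (fun i => g i / (c i + 1)) hs
  refine ⟨g i₀ / (c i₀ + 1), div_pos (hg i₀ hi₀s) (by linarith [hc i₀ hi₀s]), ?_⟩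
  intro i his
  have h1 : g i₀ / (c i₀ + 1) ≤ g i / (c i + 1) := hi₀ i his
  have hci : 0 ≤ c i := hc i his
  have hgi : 0 < g i := hg i his
  have h2 : g i₀ / (c i₀ + 1) * c i ≤ g i / (c i + 1) * c i :=
    mul_le_mul_of_nonneg_right h1 hci
  refine lt_of_le_of_lt h2 ?_
  rw [div_mul_eq_mul_div, div_lt_iff₀ (by linarith)]
  nlinarith

lemma aux_one_sub_submatrix {n : ℕ} (W : Matrix (Fin n) (Fin n) ℝ) (τ : Finset (Fin n)) :
    ((1 : Matrix (Fin n) (Fin n) ℝ) - W).submatrix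
      (Subtype.val : {i // i ∈ τ} → Fin n) Subtype.val
      = (1 : Matrix {i // i ∈ τ} {i // i ∈ τ} ℝ)
        - W.submatrix (Subtype.val : {i // i ∈ τ} → Fin n) Subtype.val := by
  ext i j
  simp only [Matrix.submatrix_apply, Matrix.sub_apply, Matrix.one_apply]
  congr 1
  by_cases h : i = j
  · subst h; simp
  · rw [if_neg h, if_neg (fun h' => h (Subtype.ext h'))]

lemma aux_det_bridge {n : ℕ} (W : Matrix (Fin n) (Fin n) ℝ) (hGA : GroundAssumption W)
    (τ : Finset (Fin n)) (S : Finset {i // i ∈ τ}) (hS : S.Nonempty) :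
    (((1 : Matrix {i // i ∈ τ} {i // i ∈ τ} ℝ)
      - W.submatrix (Subtype.val : {i // i ∈ τ} → Fin n) Subtype.val).submatrix
        (Subtype.val : {i // i ∈ S} → {i // i ∈ τ}) Subtype.val).det ≠ 0 := by
  set S' : Finset (Fin n) := S.image (fun i => i.val) with hS'
  have hS'ne : S'.Nonempty := hS.image _
  have hmem : ∀ j : Fin n, j ∈ S' → j ∈ τ := by
    intro j hj
    obtain ⟨a, _, rfl⟩ := Finset.mem_image.mp hj
    exact a.prop
  let e : {i // i ∈ S} ≃ {j // j ∈ S'} :=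
    { toFun := fun i => ⟨i.val.val, Finset.mem_image_of_mem _ i.prop⟩
      invFun := fun j => ⟨⟨j.val, hmem j.val j.prop⟩, by
        obtain ⟨a, ha, hav⟩ := Finset.mem_image.mp j.prop
        have : a = ⟨j.val, hmem j.val j.prop⟩ := Subtype.ext hav
        rwa [← this]⟩
      left_inv := fun i => by apply Subtype.ext; apply Subtype.ext; rfl
      right_inv := fun j => by apply Subtype.ext; rfl }
  have hkey : (((1 : Matrix {i // i ∈ τ} {i // i ∈ τ} ℝ)
      - W.submatrix (Subtype.val : {i // i ∈ τ} → Fin n) Subtype.val).submatrix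
        (Subtype.val : {i // i ∈ S} → {i // i ∈ τ}) Subtype.val)
      = (((1 : Matrix (Fin n) (Fin n) ℝ) - W).submatrix
          (Subtype.val : {i // i ∈ S'} → Fin n) Subtype.val).submatrix e e := by
    ext i j
    simp only [Matrix.submatrix_apply, Matrix.sub_apply, Matrix.one_apply]
    have hv : ∀ a : {i // i ∈ S}, ((e a : {j // j ∈ S'}) : Fin n)
        = ((a : {i // i ∈ τ}) : Fin n) := fun a => rfl
    rw [hv i, hv j]
    by_cases hij : ((i : {x // x ∈ τ}) : Fin n) = ((j : {x // x ∈ τ}) : Fin n)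
    · rw [if_pos (Subtype.ext hij : (i : {x // x ∈ τ}) = j), if_pos hij]
    · rw [if_neg (fun h => hij (congrArg Subtype.val h)), if_neg hij]
  rw [hkey, Matrix.det_submatrix_equiv_self]
  exact hGA S' hS'ne

end AuxLemmas

/-- a nonempty `σ ⊆ E` lies in the combinatorial code `C(W)` iff
(i) `ρ(W_{E_U ∩ σ}) < 1` and (ii) every synaptic target in `E_U` of `σ` lies in `σ`
(`N⁺_{G_E}(σ) ∩ E_U ⊆ σ`, where `i → j` in `G_E` iff `W j i > 0`, `i ≠ j ∈ E`). -/
theorem code_characterization {n : ℕ} (W : Matrix (Fin n) (Fin n) ℝ)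
    (Exc : Finset (Fin n)) (hD : IsDale W Exc) (hGA : GroundAssumption W)
    (σ : Finset (Fin n)) (hne : σ.Nonempty) (hσ : σ ⊆ Exc) :
    memCode W Exc (↑σ) ↔
      (specRad (W.submatrix
          (Subtype.val : {i // i ∈ uninhibited W Exc ∩ σ} → Fin n) Subtype.val) < 1 ∧
       ∀ j ∈ uninhibited W Exc, (∃ i ∈ σ, i ≠ j ∧ 0 < W j i) → j ∈ σ) := by
  classical
  obtain ⟨hdiag, hpos, hneg⟩ := hD
  set EU : Finset (Fin n) := uninhibited W Exc with hEUdef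
  set τ : Finset (Fin n) := EU ∩ σ with hτdef
  have hEUsub : EU ⊆ Exc := Finset.filter_subset _ _
  have hτσ : τ ⊆ σ := Finset.inter_subset_right
  have hτEU : τ ⊆ EU := Finset.inter_subset_left
  have hEU0 : ∀ i ∈ EU, ∀ k, k ∉ Exc → W i k = 0 := by
    intro i hi
    exact (Finset.mem_filter.mp hi).2
  constructor
  · -- forward direction
    rintro ⟨b, x, hb, hfp, hsupp⟩
    have hx0 : ∀ i, 0 ≤ x i := by
      intro i; rw [hfp i]; exact le_max_left _ _
    have hmemσ : ∀ i : Fin n, i ∈ σ ↔ (i ∈ Exc ∧ 0 < x i) := by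
      intro i
      rw [← Finset.mem_coe, ← hsupp]
      exact Iff.rfl
    have hxeq : ∀ i, 0 < x i → x i = W.mulVec x i + b i := by
      intro i hi
      rcases le_or_gt (W.mulVec x i + b i) 0 with h | h
      · rw [hfp i, max_eq_left h] at hi; exact absurd hi (lt_irrefl 0)
      · rw [hfp i, max_eq_right h.le]
    constructor
    · -- specRad < 1
      refine aux_subinvariant
        (W.submatrix (Subtype.val : {i // i ∈ τ} → Fin n) Subtype.val)
        (fun i j => hpos j.val (hEUsub (hτEU j.prop)) i.val)
        (fun i : {i // i ∈ τ} => x i.val)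
        (fun i => ((hmemσ i.val).mp (hτσ i.prop)).2) ?_ ?_
      · intro i
        have hiτ : i.val ∈ τ := i.prop
        have hiσ : i.val ∈ σ := hτσ hiτ
        have hiEU : i.val ∈ EU := hτEU hiτ
        have hxi : 0 < x i.val := ((hmemσ i.val).mp hiσ).2
        have hs1 : (W.submatrix (Subtype.val : {i // i ∈ τ} → Fin n)
            Subtype.val).mulVec (fun j : {i // i ∈ τ} => x j.val) i
            = ∑ j ∈ τ, W i.val j * x j := by
          exact Finset.sum_coe_sort τ (fun j => W i.val j * x j)
        have hs2 : ∑ j ∈ τ, W i.val j * x j ≤ ∑ j, W i.val j * x j := by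
          apply Finset.sum_le_sum_of_subset_of_nonneg (Finset.subset_univ τ)
          intro j _ _
          by_cases hjE : j ∈ Exc
          · exact mul_nonneg (hpos j hjE i.val) (hx0 j)
          · rw [hEU0 i.val hiEU j hjE, zero_mul]
        have hs3 : ∑ j, W i.val j * x j = W.mulVec x i.val := rfl
        calc (W.submatrix (Subtype.val : {i // i ∈ τ} → Fin n)
            Subtype.val).mulVec (fun j : {i // i ∈ τ} => x j.val) i
            = ∑ j ∈ τ, W i.val j * x j := hs1
        _ ≤ ∑ j, W i.val j * x j := hs2
        _ = W.mulVec x i.val := hs3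
        _ ≤ W.mulVec x i.val + b i.val := le_add_of_nonneg_right (hb i.val)
        _ = x i.val := (hxeq i.val hxi).symm
      · intro S hS
        exact aux_det_bridge W hGA τ S hS
    · -- closure condition
      rintro j hjEU ⟨i, hiσ, hine, hWpos⟩
      have hjExc : j ∈ Exc := hEUsub hjEU
      rw [hmemσ j]
      refine ⟨hjExc, ?_⟩
      have hxipos : 0 < x i := ((hmemσ i).mp hiσ).2
      have hWxpos : 0 < W.mulVec x j := by
        rw [aux_mulVec_apply]
        apply Finset.sum_pos' _ ⟨i, Finset.mem_univ i, mul_pos hWpos hxipos⟩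
        intro l _
        by_cases hlE : l ∈ Exc
        · exact mul_nonneg (hpos l hlE j) (hx0 l)
        · rw [hEU0 j hjEU l hlE, zero_mul]
      have hpos' : 0 < W.mulVec x j + b j := by linarith [hb j]
      rw [hfp j, max_eq_right hpos'.le]
      exact hpos'
  · -- backward direction
    rintro ⟨hρ, hclosed⟩
    have hAnn : ∀ i j : {i // i ∈ τ},
        0 ≤ W.submatrix (Subtype.val : {i // i ∈ τ} → Fin n) Subtype.val i j :=
      fun i j => hpos j.val (hEUsub (hτEU j.prop)) i.val
    obtain ⟨y, hy, hAy⟩ := aux_exists_pos_mulVec_lt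
      (W.submatrix (Subtype.val : {i // i ∈ τ} → Fin n) Subtype.val) hAnn hρ
    set Y : Fin n → ℝ := fun i => if h : i ∈ τ then y ⟨i, h⟩ else 0 with hYdef
    have hYτ : ∀ i (h : i ∈ τ), Y i = y ⟨i, h⟩ := fun i h => dif_pos h
    have hY0 : ∀ i, i ∉ τ → Y i = 0 := fun i h => dif_neg h
    have hYpos : ∀ i ∈ τ, 0 < Y i := by
      intro i h; rw [hYτ i h]; exact hy _
    have hYnn : ∀ i, 0 ≤ Y i := by
      intro i
      by_cases h : i ∈ τ
      · exact (hYpos i h).le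
      · rw [hY0 i h]
    have hsumτ : ∀ i (h : i ∈ τ),
        (W.submatrix (Subtype.val : {i // i ∈ τ} → Fin n) Subtype.val).mulVec y ⟨i, h⟩
          = ∑ j ∈ τ, W i j * Y j := by
      intro i h
      rw [← Finset.sum_coe_sort τ (fun j => W i j * Y j)]
      apply Finset.sum_congr rfl
      intro j _
      have hYj : Y j.val = y j := by rw [hYτ j.val j.prop]
      rw [hYj]
      rfl
    -- choose δ
    obtain ⟨δ, hδpos, hδ⟩ := aux_exists_pos_mul_lt τ
      (fun i => Y i - ∑ j ∈ τ, W i j * Y j) (fun i => ∑ j ∈ σ \ τ, W i j)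
      (by
        intro i hi
        show 0 < Y i - ∑ j ∈ τ, W i j * Y j
        rw [← hsumτ i hi, hYτ i hi]
        exact sub_pos.mpr (hAy ⟨i, hi⟩))
      (by
        intro i _
        show 0 ≤ ∑ j ∈ σ \ τ, W i j
        exact Finset.sum_nonneg fun j hj =>
          hpos j (hσ (Finset.mem_sdiff.mp hj).1) i)
    set x0 : Fin n → ℝ := fun i => if i ∈ τ then Y i else if i ∈ σ then δ else 0 with hx0def
    have hx0τ : ∀ i ∈ τ, x0 i = Y i := fun i h => if_pos h
    have hx0στ : ∀ i ∈ σ, i ∉ τ → x0 i = δ := by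
      intro i h hn; rw [hx0def]; simp only [if_neg hn, if_pos h]
    have hx0out : ∀ i, i ∉ σ → x0 i = 0 := by
      intro i h
      have hn : i ∉ τ := fun hc => h (hτσ hc)
      rw [hx0def]; simp only [if_neg hn, if_neg h]
    have hx0nn : ∀ i, 0 ≤ x0 i := by
      intro i
      by_cases h1 : i ∈ τ
      · rw [hx0τ i h1]; exact hYnn i
      · by_cases h2 : i ∈ σ
        · rw [hx0στ i h2 h1]; exact hδpos.le
        · rw [hx0out i h2]
    have hx0pos : ∀ i ∈ σ, 0 < x0 i := by
      intro i h
      by_cases h1 : i ∈ τ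
      · rw [hx0τ i h1]; exact hYpos i h1
      · rw [hx0στ i h h1]; exact hδpos
    set C : Fin n → ℝ := fun i => ∑ j ∈ Exc, W i j * x0 j with hCdef
    set c : Fin n → ℝ := fun i => ∑ j ∈ Finset.univ.filter (· ∉ Exc), (- W i j) with hcdef
    have hcnn : ∀ i, 0 ≤ c i := by
      intro i
      apply Finset.sum_nonneg
      intro j hj
      exact neg_nonneg.mpr (hneg j (Finset.mem_filter.mp hj).2 i)
    have hCnn : ∀ i, 0 ≤ C i := by
      intro i
      apply Finset.sum_nonneg
      intro j hj
      exact mul_nonneg (hpos j hj i) (hx0nn j)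
    have hc0 : ∀ i ∈ EU, c i = 0 := by
      intro i hi
      apply Finset.sum_eq_zero
      intro j hj
      rw [hEU0 i hi j (Finset.mem_filter.mp hj).2, neg_zero]
    have hcpos : ∀ i ∈ Exc, i ∉ EU → 0 < c i := by
      intro i hi hnEU
      have hex : ∃ k, k ∉ Exc ∧ W i k ≠ 0 := by
        by_contra hcon
        push_neg at hcon
        exact hnEU (Finset.mem_filter.mpr ⟨hi, fun k hk => hcon k hk⟩)
      obtain ⟨k, hk, hWk⟩ := hex
      have hklt : 0 < -W i k := neg_pos.mpr (lt_of_le_of_ne (hneg k hk i) hWk)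
      show 0 < ∑ j ∈ Finset.univ.filter (· ∉ Exc), (- W i j)
      refine lt_of_lt_of_le hklt (Finset.single_le_sum (f := fun j => -W i j) ?_ ?_)
      · intro l hl
        exact neg_nonneg.mpr (hneg l (Finset.mem_filter.mp hl).2 i)
      · exact Finset.mem_filter.mpr ⟨Finset.mem_univ k, hk⟩
    -- choose M
    set sM : Finset (Fin n) := Finset.univ.filter (fun i => i ∉ EU ∨ i ∉ Exc) with hsMdef
    obtain ⟨δ₂, hδ₂pos, hδ₂⟩ := aux_exists_pos_mul_lt sM
      (fun i => if i ∈ Exc then c i else c i + 1) C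
      (by
        intro i hi
        show 0 < if i ∈ Exc then c i else c i + 1
        rcases (Finset.mem_filter.mp hi).2 with h | h
        · by_cases hE : i ∈ Exc
          · rw [if_pos hE]; exact hcpos i hE h
          · rw [if_neg hE]; linarith [hcnn i]
        · rw [if_neg h]; linarith [hcnn i])
      (fun i _ => hCnn i)
    set M : ℝ := 1 / δ₂ with hMdef
    have hMpos : 0 < M := by rw [hMdef]; positivity
    have hM : ∀ i ∈ sM, C i < M * (if i ∈ Exc then c i else c i + 1) := by
      intro i hi
      have h := hδ₂ i hi
      calc C i = M * (δ₂ * C i) := by rw [hMdef]; field_simp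
      _ < M * (if i ∈ Exc then c i else c i + 1) := by
          exact mul_lt_mul_of_pos_left h hMpos
    set x : Fin n → ℝ := fun i => if i ∈ Exc then x0 i else M with hxdef
    have hxE : ∀ i ∈ Exc, x i = x0 i := fun i h => if_pos h
    have hxI : ∀ i, i ∉ Exc → x i = M := fun i h => if_neg h
    have hxnn : ∀ i, 0 ≤ x i := by
      intro i
      by_cases h : i ∈ Exc
      · rw [hxE i h]; exact hx0nn i
      · rw [hxI i h]; exact hMpos.le
    -- key identity for W *ᵥ x
    have hWx : ∀ i, W.mulVec x i = C i - c i * M := by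
      intro i
      rw [aux_mulVec_apply, ← Finset.sum_filter_add_sum_filter_not Finset.univ
        (· ∈ Exc) (fun j => W i j * x j), sub_eq_add_neg]
      congr 1
      · rw [show Finset.univ.filter (· ∈ Exc) = Exc from by ext j; simp]
        apply Finset.sum_congr rfl
        intro j hj
        rw [hxE j hj]
      · have hsum : ∑ j ∈ Finset.univ.filter (· ∉ Exc), W i j * x j
            = ∑ j ∈ Finset.univ.filter (· ∉ Exc), W i j * M := by
          apply Finset.sum_congr rfl
          intro j hj
          rw [hxI j (Finset.mem_filter.mp hj).2]
        rw [hsum]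
        show ∑ j ∈ Finset.univ.filter (· ∉ Exc), W i j * M
            = -((∑ j ∈ Finset.univ.filter (· ∉ Exc), (- W i j)) * M)
        rw [Finset.sum_mul, ← Finset.sum_neg_distrib]
        apply Finset.sum_congr rfl
        intro j _
        ring
    -- decomposition of C
    have hCsplit : ∀ i, C i = ∑ j ∈ τ, W i j * Y j + δ * ∑ j ∈ σ \ τ, W i j := by
      intro i
      show ∑ j ∈ Exc, W i j * x0 j = ∑ j ∈ τ, W i j * Y j + δ * ∑ j ∈ σ \ τ, W i j
      rw [← Finset.sum_sdiff hσ]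
      have h1 : ∑ j ∈ Exc \ σ, W i j * x0 j = 0 := by
        apply Finset.sum_eq_zero
        intro j hj
        rw [hx0out j (Finset.mem_sdiff.mp hj).2, mul_zero]
      rw [h1, zero_add, ← Finset.sum_sdiff hτσ]
      have h2 : ∑ j ∈ σ \ τ, W i j * x0 j = δ * ∑ j ∈ σ \ τ, W i j := by
        rw [Finset.mul_sum]
        apply Finset.sum_congr rfl
        intro j hj
        rw [hx0στ j (Finset.mem_sdiff.mp hj).1 (Finset.mem_sdiff.mp hj).2]
        ring
      have h3 : ∑ j ∈ τ, W i j * x0 j = ∑ j ∈ τ, W i j * Y j := by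
        apply Finset.sum_congr rfl
        intro j hj
        rw [hx0τ j hj]
      rw [h2, h3]
      ring
    -- estimates
    have hEst1 : ∀ i ∈ τ, W.mulVec x i < Y i := by
      intro i hi
      rw [hWx i, hc0 i (hτEU hi), zero_mul, sub_zero, hCsplit i]
      have := hδ i hi
      linarith
    have hsMmem1 : ∀ i ∈ Exc, i ∉ EU → i ∈ sM := by
      intro i _ h
      exact Finset.mem_filter.mpr ⟨Finset.mem_univ i, Or.inl h⟩
    have hsMmem2 : ∀ i, i ∉ Exc → i ∈ sM := by
      intro i h
      exact Finset.mem_filter.mpr ⟨Finset.mem_univ i, Or.inr h⟩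
    have hEst2 : ∀ i ∈ Exc, i ∉ EU → W.mulVec x i < 0 := by
      intro i hiE hiEU
      have := hM i (hsMmem1 i hiE hiEU)
      rw [if_pos hiE] at this
      rw [hWx i]
      linarith
    have hEst3 : ∀ i, i ∉ Exc → W.mulVec x i < M := by
      intro i hiE
      have := hM i (hsMmem2 i hiE)
      rw [if_neg hiE] at this
      rw [hWx i]
      have := hcnn i
      nlinarith
    have hEst4 : ∀ i ∈ Exc, i ∉ σ → W.mulVec x i ≤ 0 := by
      intro i hiE hiσ
      by_cases hiEU : i ∈ EU
      · have hW0 : ∀ j ∈ σ, W i j = 0 := by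
          intro j hj
          have hne' : j ≠ i := fun h => hiσ (h ▸ hj)
          have hnlt : ¬ (0 < W i j) := by
            intro hlt
            exact hiσ (hclosed i hiEU ⟨j, hj, hne', hlt⟩)
          exact le_antisymm (not_lt.mp hnlt) (hpos j (hσ hj) i)
        have hC0 : C i = 0 := by
          rw [hCsplit i]
          have e1 : ∑ j ∈ τ, W i j * Y j = 0 :=
            Finset.sum_eq_zero fun j hj => by rw [hW0 j (hτσ hj), zero_mul]
          have e2 : ∑ j ∈ σ \ τ, W i j = 0 :=
            Finset.sum_eq_zero fun j hj => hW0 j (Finset.mem_sdiff.mp hj).1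
          rw [e1, e2]
          ring
        rw [hWx i, hC0, hc0 i hiEU]
        simp
      · exact (hEst2 i hiE hiEU).le
    -- the fixed point
    have hxle : ∀ i, ¬(i ∈ Exc ∧ i ∉ σ) → W.mulVec x i ≤ x i := by
      intro i h
      by_cases hiE : i ∈ Exc
      · have hiσ : i ∈ σ := by
          by_contra hc
          exact h ⟨hiE, hc⟩
        by_cases hiτ : i ∈ τ
        · rw [hxE i hiE, hx0τ i hiτ]
          exact (hEst1 i hiτ).le
        · rw [hxE i hiE, hx0στ i hiσ hiτ]
          by_cases hiEU : i ∈ EU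
          · exact absurd (Finset.mem_inter.mpr ⟨hiEU, hiσ⟩) hiτ
          · linarith [hEst2 i hiE hiEU]
      · rw [hxI i hiE]
        exact (hEst3 i hiE).le
    refine ⟨fun i => if i ∈ Exc ∧ i ∉ σ then 0 else x i - W.mulVec x i, x, ?_, ?_, ?_⟩
    · intro i
      show (0:ℝ) ≤ if i ∈ Exc ∧ i ∉ σ then 0 else x i - W.mulVec x i
      by_cases h : i ∈ Exc ∧ i ∉ σ
      · rw [if_pos h]
      · rw [if_neg h]
        exact sub_nonneg.mpr (hxle i h)
    · intro i
      show x i = max 0 (W.mulVec x i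
        + (if i ∈ Exc ∧ i ∉ σ then 0 else x i - W.mulVec x i))
      by_cases h : i ∈ Exc ∧ i ∉ σ
      · rw [if_pos h, add_zero]
        have hx_i : x i = 0 := by
          rw [hxE i h.1, hx0out i h.2]
        rw [hx_i, max_eq_left (hEst4 i h.1 h.2)]
      · rw [if_neg h]
        have heq : W.mulVec x i + (x i - W.mulVec x i) = x i := by ring
        rw [heq, max_eq_right (hxnn i)]
    · ext i
      simp only [Set.mem_setOf_eq, Finset.coe_sort_coe, Finset.mem_coe]
      constructor
      · rintro ⟨hiE, hxi⟩
        by_contra hiσ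
        rw [hxE i hiE, hx0out i hiσ] at hxi
        exact lt_irrefl 0 hxi
      · intro hiσ
        refine ⟨hσ hiσ, ?_⟩
        rw [hxE i (hσ hiσ)]
        exact hx0pos i hiσ
end

section
/- Let W be a Dale matrix satisfying the Ground Assumption. Then the combinatorial code C(W) is intersection-complete: if σ, τ ∈ C(W), then σ ∩ τ ∈ C(W). -/
open Matrix BigOperators

/- ## Auxiliary development -/

section Aux

variable {n : ℕ}

lemma exists_small (S : Finset (Fin n)) (g C : Fin n → ℝ)
    (hg : ∀ i ∈ S, 0 < g i) (hC : ∀ i ∈ S, 0 ≤ C i) :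
    ∃ δ : ℝ, 0 < δ ∧ ∀ i ∈ S, δ * C i < g i := by
  rcases S.eq_empty_or_nonempty with rfl | hS
  · exact ⟨1, one_pos, by simp⟩
  · refine ⟨S.inf' hS (fun i => g i / (C i + 1)), ?_, ?_⟩
    · rw [Finset.lt_inf'_iff]
      intro i hi
      exact div_pos (hg i hi) (by linarith [hC i hi])
    · intro i hi
      have h1 : S.inf' hS (fun i => g i / (C i + 1)) ≤ g i / (C i + 1) :=
        Finset.inf'_le _ hi
      have hCi := hC i hi; have hgi := hg i hi
      have h2 : g i / (C i + 1) * C i < g i := by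
        rw [div_mul_eq_mul_div, div_lt_iff₀ (by linarith)]
        nlinarith
      calc S.inf' hS (fun i => g i / (C i + 1)) * C i
          ≤ g i / (C i + 1) * C i := mul_le_mul_of_nonneg_right h1 hCi
        _ < g i := h2

lemma exists_large (f : Fin n → ℝ) : ∃ M : ℝ, 1 ≤ M ∧ ∀ i, f i ≤ M := by
  refine ⟨1 + ∑ i, max 0 (f i), ?_, ?_⟩
  · have : (0:ℝ) ≤ ∑ i, max 0 (f i) :=
      Finset.sum_nonneg fun i _ => le_max_left 0 (f i)
    linarith
  · intro i
    have h1 : max 0 (f i) ≤ ∑ j, max 0 (f j) :=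
      Finset.single_le_sum (fun j _ => le_max_left 0 (f j)) (Finset.mem_univ i)
    have := le_max_right 0 (f i)
    linarith

/-- If a nonnegative matrix has a positive weakly-subinvariant vector on `S` and all
principal submatrices of `I - W` are nonsingular, then there is a strictly
subinvariant positive vector on `S`. -/
lemma strict_subinv (W : Matrix (Fin n) (Fin n) ℝ)
    (hGA : GroundAssumption W) :
    ∀ S : Finset (Fin n), (∀ i ∈ S, ∀ j ∈ S, 0 ≤ W i j) →
    ∀ x : Fin n → ℝ, (∀ i ∈ S, 0 < x i) →
      (∀ i ∈ S, ∑ j ∈ S, W i j * x j ≤ x i) →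
    ∃ z : Fin n → ℝ, (∀ i ∈ S, 0 < z i) ∧ (∀ i ∈ S, ∑ j ∈ S, W i j * z j < z i) := by
  intro S
  induction S using Finset.strongInduction with
  | _ S ih =>
    intro hnn x hx hle
    classical
    set T : Finset (Fin n) := S.filter (fun i => x i ≤ ∑ j ∈ S, W i j * x j) with hT
    have hTS : T ⊆ S := Finset.filter_subset _ _
    rcases T.eq_empty_or_nonempty with hTe | hTne
    · refine ⟨x, hx, fun i hi => ?_⟩
      have : i ∉ T := by simp [hTe]
      rw [hT, Finset.mem_filter] at this
      push_neg at this
      exact this hi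
    · by_cases hTSeq : T = S
      · exfalso
        have heq : ∀ i ∈ S, ∑ j ∈ S, W i j * x j = x i := by
          intro i hi
          have : i ∈ T := hTSeq ▸ hi
          rw [hT, Finset.mem_filter] at this
          exact le_antisymm (hle i hi) this.2
        have hSne : S.Nonempty := hTSeq ▸ hTne
        apply hGA S hSne
        rw [← Matrix.exists_mulVec_eq_zero_iff]
        refine ⟨fun j => x j.val, ?_, ?_⟩
        · obtain ⟨i, hi⟩ := hSne
          intro h0
          have := congrFun h0 ⟨i, hi⟩
          simp only [Pi.zero_apply] at this
          exact absurd this (ne_of_gt (hx i hi))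
        · funext i
          simp only [Matrix.mulVec, dotProduct, Matrix.submatrix_apply,
            Matrix.sub_apply, Pi.zero_apply]
          rw [Finset.sum_coe_sort S (fun j => ((1 : Matrix (Fin n) (Fin n) ℝ) i.val j - W i.val j) * x j)]
          have : ∑ j ∈ S, ((1 : Matrix (Fin n) (Fin n) ℝ) i.val j - W i.val j) * x j
              = (∑ j ∈ S, (if i.val = j then x j else 0)) - ∑ j ∈ S, W i.val j * x j := by
            rw [← Finset.sum_sub_distrib]
            apply Finset.sum_congr rfl
            intro j hj
            rw [Matrix.one_apply]
            by_cases h : i.val = j <;> simp [h] <;> ring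
          rw [this, Finset.sum_ite_eq S i.val x, if_pos i.2, heq i.val i.2]
          ring
      · have hTlt : T ⊂ S := lt_of_le_of_ne hTS hTSeq
        obtain ⟨w, hw, hws⟩ := ih T hTlt
          (fun i hi j hj => hnn i (hTS hi) j (hTS hj)) x (fun i hi => hx i (hTS hi))
          (by
            intro i hi
            calc ∑ j ∈ T, W i j * x j ≤ ∑ j ∈ S, W i j * x j := by
                  apply Finset.sum_le_sum_of_subset_of_nonneg hTS
                  intro j hj _
                  exact mul_nonneg (hnn i (hTS hi) j hj) (le_of_lt (hx j hj))
              _ ≤ x i := hle i (hTS hi))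
        obtain ⟨δ, hδ, hδs⟩ := exists_small (S \ T)
          (fun i => x i - ∑ j ∈ S, W i j * x j)
          (fun i => ∑ j ∈ T, W i j * w j)
          (by
            intro i hi
            rw [Finset.mem_sdiff] at hi
            have : ¬ (x i ≤ ∑ j ∈ S, W i j * x j) := by
              intro h; exact hi.2 (Finset.mem_filter.2 ⟨hi.1, h⟩)
            push_neg at this
            show 0 < x i - ∑ j ∈ S, W i j * x j
            linarith)
          (by
            intro i hi
            rw [Finset.mem_sdiff] at hi
            exact Finset.sum_nonneg fun j hj =>
              mul_nonneg (hnn i hi.1 j (hTS hj)) (le_of_lt (hw j hj)))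
        refine ⟨fun i => x i + δ * (if i ∈ T then w i else 0), ?_, ?_⟩
        · intro i hi
          show 0 < x i + δ * (if i ∈ T then w i else 0)
          by_cases h : i ∈ T
          · simp only [if_pos h]
            have := hw i h
            nlinarith [hx i hi]
          · simp only [if_neg h, mul_zero, add_zero]
            exact hx i hi
        · intro i hi
          show ∑ j ∈ S, W i j * (x j + δ * (if j ∈ T then w j else 0))
              < x i + δ * (if i ∈ T then w i else 0)
          have hsum : ∑ j ∈ S, W i j * (x j + δ * (if j ∈ T then w j else 0))
              = (∑ j ∈ S, W i j * x j) + δ * ∑ j ∈ T, W i j * w j := by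
            calc ∑ j ∈ S, W i j * (x j + δ * (if j ∈ T then w j else 0))
                = ∑ j ∈ S, (W i j * x j + (if j ∈ T then δ * (W i j * w j) else 0)) := by
                  apply Finset.sum_congr rfl
                  intro j hj
                  by_cases h : j ∈ T <;> simp [h] <;> ring
              _ = (∑ j ∈ S, W i j * x j)
                    + ∑ j ∈ S, (if j ∈ T then δ * (W i j * w j) else 0) :=
                  Finset.sum_add_distrib
              _ = (∑ j ∈ S, W i j * x j) + ∑ j ∈ T, δ * (W i j * w j) := by
                  rw [Finset.sum_ite_mem, Finset.inter_eq_right.2 hTS]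
              _ = (∑ j ∈ S, W i j * x j) + δ * ∑ j ∈ T, W i j * w j := by
                  rw [Finset.mul_sum]
          rw [hsum]
          by_cases h : i ∈ T
          · have heq : ∑ j ∈ S, W i j * x j = x i := by
              have := (Finset.mem_filter.1 h).2
              exact le_antisymm (hle i hi) this
            rw [heq, if_pos h]
            have := hws i h
            nlinarith
          · rw [if_neg h, mul_zero, add_zero]
            have := hδs i (Finset.mem_sdiff.2 ⟨hi, h⟩)
            linarith

/-- `i` is an uninhibited neuron: it receives no input from inhibitory neurons. -/
def Unin (W : Matrix (Fin n) (Fin n) ℝ) (Exc : Finset (Fin n)) (i : Fin n) : Prop :=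
  ∀ k ∉ Exc, W i k = 0

/-- The finite set of uninhibited excitatory neurons in `σ`. -/
noncomputable def EUfin (W : Matrix (Fin n) (Fin n) ℝ) (Exc : Finset (Fin n))
    (σ : Set (Fin n)) : Finset (Fin n) :=
  (Set.toFinite {i : Fin n | i ∈ Exc ∧ Unin W Exc i ∧ i ∈ σ}).toFinset

lemma mem_EUfin {W : Matrix (Fin n) (Fin n) ℝ} {Exc : Finset (Fin n)}
    {σ : Set (Fin n)} {i : Fin n} :
    i ∈ EUfin W Exc σ ↔ (i ∈ Exc ∧ Unin W Exc i ∧ i ∈ σ) := by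
  simp [EUfin, Set.Finite.mem_toFinset]

/-- The combinatorial characterization of membership in the code. -/
def Cond (W : Matrix (Fin n) (Fin n) ℝ) (Exc : Finset (Fin n)) (σ : Set (Fin n)) : Prop :=
  σ ⊆ ↑Exc ∧
  (∀ i ∈ Exc, Unin W Exc i → ∀ j ∈ σ, 0 < W i j → i ∈ σ) ∧
  ∃ z : Fin n → ℝ, ∀ i ∈ EUfin W Exc σ,
    0 < z i ∧ ∑ j ∈ EUfin W Exc σ, W i j * z j < z i

lemma cond_of_memCode {W : Matrix (Fin n) (Fin n) ℝ} {Exc : Finset (Fin n)}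
    (hD : IsDale W Exc) (hGA : GroundAssumption W) {σ : Set (Fin n)}
    (h : memCode W Exc σ) : Cond W Exc σ := by
  classical
  obtain ⟨b, x, hb, hfix, hsupp⟩ := h
  obtain ⟨hdiag, hpos, hneg⟩ := hD
  have hx0 : ∀ i, 0 ≤ x i := fun i => (hfix i) ▸ le_max_left _ _
  have hmv : ∀ i, W.mulVec x i = ∑ j, W i j * x j := fun i => rfl
  -- all summands are nonnegative for uninhibited neurons
  have htn : ∀ i, Unin W Exc i → ∀ j : Fin n, 0 ≤ W i j * x j := by
    intro i hU j
    by_cases hj : j ∈ Exc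
    · exact mul_nonneg (hpos j hj i) (hx0 j)
    · rw [hU j hj, zero_mul]
  have hσE : σ ⊆ ↑Exc := by
    rw [← hsupp]; intro i hi; exact hi.1
  refine ⟨hσE, ?_, ?_⟩
  · intro i hiE hU j hjσ hWij
    have hj : j ∈ Exc ∧ 0 < x j := by rw [← hsupp] at hjσ; exact hjσ
    have hsum : W i j * x j ≤ ∑ k, W i k * x k :=
      Finset.single_le_sum (fun k _ => htn i hU k) (Finset.mem_univ j)
    have hpos' : 0 < W.mulVec x i + b i := by
      rw [hmv]
      have h1 : 0 < W i j * x j := mul_pos hWij hj.2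
      have h2 := hb i
      linarith
    have hxi : 0 < x i := by
      rw [hfix i]
      exact lt_of_lt_of_le hpos' (le_max_right 0 _)
    rw [← hsupp]; exact ⟨hiE, hxi⟩
  · set S := EUfin W Exc σ with hS
    have hmem : ∀ i, i ∈ S ↔ (i ∈ Exc ∧ Unin W Exc i ∧ i ∈ σ) := fun i => mem_EUfin
    have hnn : ∀ i ∈ S, ∀ j ∈ S, 0 ≤ W i j := by
      intro i hi j hj
      exact hpos j ((hmem j).1 hj).1 i
    have hxpos : ∀ i ∈ S, 0 < x i := by
      intro i hi
      have := ((hmem i).1 hi).2.2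
      rw [← hsupp] at this
      exact this.2
    have hweak : ∀ i ∈ S, ∑ j ∈ S, W i j * x j ≤ x i := by
      intro i hi
      obtain ⟨hiE, hU, hiσ⟩ := (hmem i).1 hi
      have hxv : x i = W.mulVec x i + b i := by
        rcases le_or_gt (W.mulVec x i + b i) 0 with hc | hc
        · exfalso
          have : x i = 0 := by rw [hfix i]; exact max_eq_left hc
          exact absurd this (ne_of_gt (hxpos i hi))
        · rw [hfix i]; exact max_eq_right (le_of_lt hc)
      have h1 : ∑ j ∈ S, W i j * x j ≤ ∑ j, W i j * x j := by
        apply Finset.sum_le_sum_of_subset_of_nonneg (Finset.subset_univ S)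
        intro j _ _
        exact htn i hU j
      have h2 := hb i
      rw [hmv] at hxv
      linarith
    obtain ⟨z, hz1, hz2⟩ := strict_subinv W hGA S hnn x hxpos hweak
    exact ⟨z, fun i hi => ⟨hz1 i hi, hz2 i hi⟩⟩

lemma cond_inter {W : Matrix (Fin n) (Fin n) ℝ} {Exc : Finset (Fin n)}
    (hD : IsDale W Exc) {σ τ : Set (Fin n)}
    (hcσ : Cond W Exc σ) (hcτ : Cond W Exc τ) : Cond W Exc (σ ∩ τ) := by
  obtain ⟨hσE, hσc, z, hz⟩ := hcσ
  obtain ⟨hτE, hτc, _, _⟩ := hcτ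
  refine ⟨fun i hi => hσE hi.1, ?_, ?_⟩
  · intro i hiE hU j hj hW
    exact ⟨hσc i hiE hU j hj.1 hW, hτc i hiE hU j hj.2 hW⟩
  · refine ⟨z, ?_⟩
    intro i hi
    have hsub : EUfin W Exc (σ ∩ τ) ⊆ EUfin W Exc σ := by
      intro k hk
      rw [mem_EUfin] at hk ⊢
      exact ⟨hk.1, hk.2.1, hk.2.2.1⟩
    have hiS := hsub hi
    refine ⟨(hz i hiS).1, ?_⟩
    calc ∑ j ∈ EUfin W Exc (σ ∩ τ), W i j * z j
        ≤ ∑ j ∈ EUfin W Exc σ, W i j * z j := by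
          apply Finset.sum_le_sum_of_subset_of_nonneg hsub
          intro j hj _
          exact mul_nonneg (hD.2.1 j (mem_EUfin.1 hj).1 i) (le_of_lt (hz j hj).1)
      _ < z i := (hz i hiS).2

lemma memCode_of_cond {W : Matrix (Fin n) (Fin n) ℝ} {Exc : Finset (Fin n)}
    (hD : IsDale W Exc) {σ : Set (Fin n)}
    (h : Cond W Exc σ) : memCode W Exc σ := by
  classical
  obtain ⟨hσE, hclose, z, hz⟩ := h
  obtain ⟨hdiag, hpos, hneg⟩ := hD
  set S := EUfin W Exc σ with hSdef
  set Tf : Finset (Fin n) :=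
    Finset.univ.filter (fun j => j ∈ Exc ∧ j ∈ σ ∧ ¬ Unin W Exc j) with hTfdef
  have hmemS : ∀ i, i ∈ S ↔ (i ∈ Exc ∧ Unin W Exc i ∧ i ∈ σ) := fun i => mem_EUfin
  have hmemT : ∀ i, i ∈ Tf ↔ (i ∈ Exc ∧ i ∈ σ ∧ ¬ Unin W Exc i) := by
    intro i; simp [hTfdef]
  obtain ⟨δ, hδ, hδs⟩ := exists_small S
    (fun i => z i - ∑ j ∈ S, W i j * z j)
    (fun i => ∑ j ∈ Tf, W i j)
    (fun i hi => by have := (hz i hi).2; show 0 < z i - ∑ j ∈ S, W i j * z j; linarith)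
    (fun i hi => Finset.sum_nonneg fun j hj => hpos j ((hmemT j).1 hj).1 i)
  set xe : Fin n → ℝ :=
    fun j => if j ∈ σ then (if Unin W Exc j then z j else δ) else 0 with hxedef
  set P : Fin n → ℝ := fun i => ∑ j ∈ Exc, W i j * xe j with hPdef
  set N : Fin n → ℝ := fun i => ∑ j ∈ Excᶜ, W i j with hNdef
  obtain ⟨M, hM1, hM⟩ := exists_large
    (fun i => if i ∈ Exc then (if Unin W Exc i then 0 else P i / (-N i)) else P i)
  set x : Fin n → ℝ := fun i => if i ∈ Exc then xe i else M with hxdef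
  have hN0 : ∀ i, N i ≤ 0 :=
    fun i => Finset.sum_nonpos fun j hj => hneg j (Finset.mem_compl.1 hj) i
  have hNneg : ∀ i, ¬ Unin W Exc i → N i < 0 := by
    intro i hU
    rw [Unin] at hU
    push_neg at hU
    obtain ⟨k, hk, hWk⟩ := hU
    have hlt : W i k < 0 := lt_of_le_of_ne (hneg k hk i) hWk
    have : N i < ∑ j ∈ Excᶜ, (0:ℝ) := by
      apply Finset.sum_lt_sum
      · intro j hj; exact hneg j (Finset.mem_compl.1 hj) i
      · exact ⟨k, Finset.mem_compl.2 hk, hlt⟩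
    simpa using this
  have hNz : ∀ i, Unin W Exc i → N i = 0 := by
    intro i hU
    exact Finset.sum_eq_zero fun j hj => hU j (Finset.mem_compl.1 hj)
  have hmv : ∀ i, W.mulVec x i = P i + M * N i := by
    intro i
    have h1 : W.mulVec x i = ∑ j, W i j * x j := rfl
    rw [h1, ← Finset.sum_add_sum_compl Exc (fun j => W i j * x j)]
    congr 1
    · apply Finset.sum_congr rfl
      intro j hj
      rw [hxdef]; simp only [if_pos hj]
    · rw [hNdef, Finset.mul_sum]
      apply Finset.sum_congr rfl
      intro j hj
      have : j ∉ Exc := Finset.mem_compl.1 hj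
      rw [hxdef]; simp only [if_neg this]; ring
  -- positivity of entries of x
  have hzpos : ∀ i ∈ S, 0 < z i := fun i hi => (hz i hi).1
  have hxe_pos : ∀ i ∈ Exc, i ∈ σ → 0 < xe i := by
    intro i hiE hiσ
    rw [hxedef]
    simp only [if_pos hiσ]
    by_cases hU : Unin W Exc i
    · rw [if_pos hU]
      exact hzpos i ((hmemS i).2 ⟨hiE, hU, hiσ⟩)
    · rw [if_neg hU]; exact hδ
  have hxe_zero : ∀ i, i ∉ σ → xe i = 0 := by
    intro i hi; rw [hxedef]; simp only [if_neg hi]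
  have hx0 : ∀ i, 0 ≤ x i := by
    intro i
    rw [hxdef]
    by_cases hiE : i ∈ Exc
    · simp only [if_pos hiE]
      by_cases hiσ : i ∈ σ
      · exact le_of_lt (hxe_pos i hiE hiσ)
      · rw [hxe_zero i hiσ]
    · simp only [if_neg hiE]; linarith
  -- decomposition of P
  have hSsub : S ⊆ Exc := fun j hj => ((hmemS j).1 hj).1
  have hTsub : Tf ⊆ Exc := fun j hj => ((hmemT j).1 hj).1
  have hP_decomp : ∀ i, P i = (∑ j ∈ S, W i j * z j) + δ * ∑ j ∈ Tf, W i j := by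
    intro i
    rw [hPdef]
    calc ∑ j ∈ Exc, W i j * xe j
        = ∑ j ∈ Exc, ((if j ∈ S then W i j * z j else 0)
            + (if j ∈ Tf then δ * W i j else 0)) := by
          apply Finset.sum_congr rfl
          intro j hj
          by_cases hjσ : j ∈ σ
          · by_cases hU : Unin W Exc j
            · have hjS : j ∈ S := (hmemS j).2 ⟨hj, hU, hjσ⟩
              have hjT : j ∉ Tf := fun hc => ((hmemT j).1 hc).2.2 hU
              rw [hxedef]
              simp only [if_pos hjσ, if_pos hU, if_pos hjS, if_neg hjT, add_zero]
            · have hjS : j ∉ S := fun hc => hU ((hmemS j).1 hc).2.1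
              have hjT : j ∈ Tf := (hmemT j).2 ⟨hj, hjσ, hU⟩
              rw [hxedef]
              simp only [if_pos hjσ, if_neg hU, if_neg hjS, if_pos hjT, zero_add]
              ring
          · have hjS : j ∉ S := fun hc => hjσ ((hmemS j).1 hc).2.2
            have hjT : j ∉ Tf := fun hc => hjσ ((hmemT j).1 hc).2.1
            rw [hxe_zero j hjσ]
            simp only [if_neg hjS, if_neg hjT, add_zero, mul_zero]
      _ = (∑ j ∈ Exc, (if j ∈ S then W i j * z j else 0))
            + ∑ j ∈ Exc, (if j ∈ Tf then δ * W i j else 0) := Finset.sum_add_distrib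
      _ = (∑ j ∈ S, W i j * z j) + ∑ j ∈ Tf, δ * W i j := by
          rw [Finset.sum_ite_mem, Finset.sum_ite_mem,
            Finset.inter_eq_right.2 hSsub, Finset.inter_eq_right.2 hTsub]
      _ = (∑ j ∈ S, W i j * z j) + δ * ∑ j ∈ Tf, W i j := by
          rw [Finset.mul_sum]
  -- the three key bounds
  have key1 : ∀ i ∈ Exc, ¬ Unin W Exc i → P i + M * N i ≤ 0 := by
    intro i hiE hU
    have hNi := hNneg i hU
    have := hM i
    rw [if_pos hiE, if_neg hU] at this
    rw [div_le_iff₀ (by linarith : (0:ℝ) < -N i)] at this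
    linarith
  have key2 : ∀ i, i ∉ Exc → P i + M * N i ≤ M := by
    intro i hiE
    have := hM i
    rw [if_neg hiE] at this
    have h1 : M * N i ≤ 0 := mul_nonpos_of_nonneg_of_nonpos (by linarith) (hN0 i)
    linarith
  have key3 : ∀ i ∈ S, W.mulVec x i < z i := by
    intro i hi
    obtain ⟨hiE, hU, hiσ⟩ := (hmemS i).1 hi
    rw [hmv i, hNz i hU, mul_zero, add_zero, hP_decomp i]
    have := hδs i hi
    linarith
  have key4 : ∀ i ∈ Exc, Unin W Exc i → i ∉ σ → W.mulVec x i ≤ 0 := by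
    intro i hiE hU hiσ
    have hWz : ∀ j, j ∈ σ → j ∈ Exc → W i j = 0 := by
      intro j hjσ hjE
      by_contra hne
      have : 0 < W i j := lt_of_le_of_ne (hpos j hjE i) (Ne.symm hne)
      exact hiσ (hclose i hiE hU j hjσ this)
    have hP0 : P i = 0 := by
      rw [hP_decomp i]
      have h1 : ∑ j ∈ S, W i j * z j = 0 :=
        Finset.sum_eq_zero fun j hj => by
          rw [hWz j ((hmemS j).1 hj).2.2 ((hmemS j).1 hj).1, zero_mul]
      have h2 : ∑ j ∈ Tf, W i j = 0 :=
        Finset.sum_eq_zero fun j hj =>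
          hWz j ((hmemT j).1 hj).2.1 ((hmemT j).1 hj).1
      rw [h1, h2, mul_zero, add_zero]
    rw [hmv i, hP0, hNz i hU, mul_zero, add_zero]
  -- main inequality: W x ≤ x on the support
  have hWlex : ∀ i, 0 < x i → W.mulVec x i ≤ x i := by
    intro i hxi
    rw [hxdef] at hxi ⊢
    by_cases hiE : i ∈ Exc
    · simp only [if_pos hiE] at hxi ⊢
      by_cases hiσ : i ∈ σ
      · by_cases hU : Unin W Exc i
        · have hiS : i ∈ S := (hmemS i).2 ⟨hiE, hU, hiσ⟩
          have := key3 i hiS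
          have hxeq : xe i = z i := by
            rw [hxedef]; simp only [if_pos hiσ, if_pos hU]
          rw [hxeq]
          exact le_of_lt this
        · have hxeq : xe i = δ := by
            rw [hxedef]; simp only [if_pos hiσ, if_neg hU]
          rw [hxeq, hmv i]
          have := key1 i hiE hU
          linarith
      · exfalso
        rw [hxe_zero i hiσ] at hxi
        exact lt_irrefl 0 hxi
    · simp only [if_neg hiE] at hxi ⊢
      rw [hmv i]
      exact key2 i hiE
  have hWle0 : ∀ i, x i = 0 → W.mulVec x i ≤ 0 := by
    intro i hxi
    have hiE : i ∈ Exc := by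
      by_contra hc
      rw [hxdef] at hxi
      simp only [if_neg hc] at hxi
      linarith
    have hiσ : i ∉ σ := by
      intro hc
      rw [hxdef] at hxi
      simp only [if_pos hiE] at hxi
      exact absurd hxi (ne_of_gt (hxe_pos i hiE hc))
    by_cases hU : Unin W Exc i
    · exact key4 i hiE hU hiσ
    · rw [hmv i]; exact key1 i hiE hU
  -- assemble the fixed point
  set b : Fin n → ℝ := fun i => if 0 < x i then x i - W.mulVec x i else 0 with hbdef
  refine ⟨b, x, ?_, ?_, ?_⟩
  · intro i
    rw [hbdef]
    by_cases hxi : 0 < x i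
    · simp only [if_pos hxi]
      have := hWlex i hxi
      linarith
    · simp only [if_neg hxi]
      exact le_refl 0
  · intro i
    by_cases hxi : 0 < x i
    · have hbv : b i = x i - W.mulVec x i := by rw [hbdef]; simp only [if_pos hxi]
      rw [hbv]
      have : W.mulVec x i + (x i - W.mulVec x i) = x i := by ring
      rw [this]
      exact (max_eq_right (le_of_lt hxi)).symm
    · have hx00 : x i = 0 := le_antisymm (not_lt.1 hxi) (hx0 i)
      have hbv : b i = 0 := by rw [hbdef]; simp only [if_neg hxi]
      rw [hbv, add_zero, hx00]
      exact (max_eq_left (hWle0 i hx00)).symm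
  · ext i
    simp only [Set.mem_setOf_eq]
    constructor
    · rintro ⟨hiE, hxi⟩
      by_contra hiσ
      rw [hxdef] at hxi
      simp only [if_pos hiE] at hxi
      rw [hxe_zero i hiσ] at hxi
      exact lt_irrefl 0 hxi
    · intro hiσ
      have hiE : i ∈ Exc := hσE hiσ
      refine ⟨hiE, ?_⟩
      rw [hxdef]
      simp only [if_pos hiE]
      exact hxe_pos i hiE hiσ

end Aux

/-- the combinatorial code of a Dale network is intersection-complete. -/
theorem code_intersection_complete {n : ℕ} (W : Matrix (Fin n) (Fin n) ℝ)
    (Exc : Finset (Fin n)) (hD : IsDale W Exc) (hGA : GroundAssumption W)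
    (σ τ : Set (Fin n)) (hσ : memCode W Exc σ) (hτ : memCode W Exc τ) :
    memCode W Exc (σ ∩ τ) := by
  exact memCode_of_cond hD
    (cond_inter hD (cond_of_memCode hD hGA hσ) (cond_of_memCode hD hGA hτ))
end

section
/- Let W be a Dale matrix with excitatory neurons E and inhibitory neurons I, satisfying the Ground Assumption, and let W' agree with W except that all entries W'_{ij} with i ∈ I, j ∈ E are set to zero (i.e., all excitatory-to-inhibitory synapses are removed). Assume W' also satisfies the Ground Assumption. Then C(W) = C(W'), i.e., the two networks have the same combinatorial code of excitatory supports of fixed points. -/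
open Matrix BigOperators

lemma fp_nonneg {n : ℕ} {W : Matrix (Fin n) (Fin n) ℝ} {b x : Fin n → ℝ}
    (h : IsFixedPt W b x) (i : Fin n) : 0 ≤ x i := by
  rw [h i]; exact le_max_left _ _

lemma fp_ge {n : ℕ} {W : Matrix (Fin n) (Fin n) ℝ} {b x : Fin n → ℝ}
    (hb : ∀ i, 0 ≤ b i) (h : IsFixedPt W b x) (i : Fin n) :
    W.mulVec x i ≤ x i := by
  have h1 := h i
  have h2 := le_max_right (0:ℝ) (W.mulVec x i + b i)
  have := hb i
  linarith

lemma mk_fp {n : ℕ} {W : Matrix (Fin n) (Fin n) ℝ} {x : Fin n → ℝ}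
    (hx : ∀ i, 0 ≤ x i) : IsFixedPt W (fun i => x i - W.mulVec x i) x := by
  intro i
  have : W.mulVec x i + (x i - W.mulVec x i) = x i := by ring
  rw [this, max_eq_right (hx i)]

/-- removing all excitatory-to-inhibitory synapses (setting `W' i j = 0`
for `i` inhibitory, `j` excitatory) does not change the combinatorial code. -/
theorem code_invariant_remove_exc_to_inh {n : ℕ} (W W' : Matrix (Fin n) (Fin n) ℝ)
    (Exc : Finset (Fin n)) (hD : IsDale W Exc)
    (hW' : ∀ i j, W' i j = if i ∉ Exc ∧ j ∈ Exc then 0 else W i j)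
    (hGA : GroundAssumption W) (hGA' : GroundAssumption W') :
    ∀ σ : Set (Fin n), memCode W Exc σ ↔ memCode W' Exc σ := by
  obtain ⟨hdiag, hpos, hneg⟩ := hD
  have hrowE : ∀ i ∈ Exc, ∀ x : Fin n → ℝ, W'.mulVec x i = W.mulVec x i := by
    intro i hi x
    simp only [Matrix.mulVec, dotProduct]
    refine Finset.sum_congr rfl fun j _ => ?_
    rw [hW' i j, if_neg (by tauto)]
  intro σ
  constructor
  · -- W → W'
    rintro ⟨b, x, hb, hfp, hsupp⟩
    have hxnn := fp_nonneg hfp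
    have hge := fp_ge hb hfp
    refine ⟨fun i => x i - W'.mulVec x i, x, ?_, mk_fp hxnn, hsupp⟩
    intro i
    by_cases hi : i ∈ Exc
    · show 0 ≤ x i - W'.mulVec x i
      rw [hrowE i hi]
      have := hge i; linarith
    · have hle : W'.mulVec x i ≤ 0 := by
        simp only [Matrix.mulVec, dotProduct]
        apply Finset.sum_nonpos
        intro j _
        rw [hW' i j]
        by_cases hj : j ∈ Exc
        · rw [if_pos ⟨hi, hj⟩]; simp
        · rw [if_neg (by tauto)]
          exact mul_nonpos_of_nonpos_of_nonneg (hneg j hj i) (hxnn j)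
      have := hxnn i
      show 0 ≤ x i - W'.mulVec x i
      linarith
  · -- W' → W
    rintro ⟨b', x', hb', hfp', hsupp⟩
    have hxnn := fp_nonneg hfp'
    have hge := fp_ge hb' hfp'
    set t : ℝ := 1 + (∑ j, x' j) + ∑ i, ∑ j, |W i j| * x' j with ht
    have hsum1 : (0:ℝ) ≤ ∑ j, x' j := Finset.sum_nonneg fun j _ => hxnn j
    have hsum2 : ∀ i : Fin n, (∑ j, |W i j| * x' j) ≤ ∑ i, ∑ j, |W i j| * x' j := by
      intro i
      apply Finset.single_le_sum (f := fun i => ∑ j, |W i j| * x' j)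
        (fun k _ => Finset.sum_nonneg fun j _ => mul_nonneg (abs_nonneg _) (hxnn j))
        (Finset.mem_univ i)
    have hsum2' : (0:ℝ) ≤ ∑ i, ∑ j, |W i j| * x' j :=
      Finset.sum_nonneg fun k _ => Finset.sum_nonneg fun j _ => mul_nonneg (abs_nonneg _) (hxnn j)
    have htx : ∀ j, x' j ≤ t := by
      intro j
      have : x' j ≤ ∑ j, x' j := Finset.single_le_sum (fun k _ => hxnn k) (Finset.mem_univ j)
      rw [ht]; linarith
    have ht0 : (0:ℝ) < t := by rw [ht]; linarith
    set x : Fin n → ℝ := fun i => if i ∈ Exc then x' i else t with hx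
    have hxnn' : ∀ i, 0 ≤ x i := by
      intro i; rw [hx]; dsimp only
      split
      · exact hxnn i
      · exact le_of_lt ht0
    refine ⟨fun i => x i - W.mulVec x i, x, ?_, mk_fp hxnn', ?_⟩
    · intro i
      by_cases hi : i ∈ Exc
      · -- x' i ≥ W'.mulVec x' i = W.mulVec x' i ; and W.mulVec x i ≤ W.mulVec x' i
        have h1 : W.mulVec x' i ≤ x' i := by
          have := hge i; rwa [hrowE i hi] at this
        have h2 : W.mulVec x i ≤ W.mulVec x' i := by
          simp only [Matrix.mulVec, dotProduct]
          apply Finset.sum_le_sum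
          intro j _
          by_cases hj : j ∈ Exc
          · rw [hx]; simp [hj]
          · have hW : W i j ≤ 0 := hneg j hj i
            have : x j = t := by rw [hx]; simp [hj]
            rw [this]
            exact mul_le_mul_of_nonpos_left (htx j) hW
        have hxi : x i = x' i := by rw [hx]; simp [hi]
        show 0 ≤ x i - W.mulVec x i
        rw [hxi]; linarith
      · have hxi : x i = t := by rw [hx]; simp [hi]
        have hle : W.mulVec x i ≤ ∑ j, |W i j| * x' j := by
          simp only [Matrix.mulVec, dotProduct]
          apply Finset.sum_le_sum
          intro j _
          by_cases hj : j ∈ Exc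
          · have : x j = x' j := by rw [hx]; simp [hj]
            rw [this]
            exact mul_le_mul_of_nonneg_right (le_abs_self _) (hxnn j)
          · have : x j = t := by rw [hx]; simp [hj]
            rw [this]
            have h1 : W i j * t ≤ 0 :=
              mul_nonpos_of_nonpos_of_nonneg (hneg j hj i) (le_of_lt ht0)
            exact le_trans h1 (mul_nonneg (abs_nonneg _) (hxnn j))
        have := hsum2 i
        show 0 ≤ x i - W.mulVec x i
        rw [hxi, ht]; linarith
    · rw [← hsupp]
      ext i
      simp only [Set.mem_setOf_eq, hx]
      constructor
      · rintro ⟨hi, hpos⟩; rw [if_pos hi] at hpos; exact ⟨hi, hpos⟩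
      · rintro ⟨hi, hpos⟩; exact ⟨hi, by rwa [if_pos hi]⟩
end

section
/- Let W be a Dale matrix with a single inhibitory neuron n whose row is zero (W_{nk} = 0 for all k), satisfying the Ground Assumption, and let σ ⊆ E be nonempty with τ = σ ⊔ {n}. If there exists x > 0 (indexed by τ) with (I−W)_τ x ≥ 0 and −W_{τ̄ τ} x ≥ 0, then (I−W)_{E_U ∩ σ} is a nonsingular M-matrix, i.e., ρ(W_{E_U ∩ σ}) < 1, and moreover every j ∈ E \ σ receiving a positive synapse from some i ∈ σ (W_{ji} > 0) must satisfy W_{jn} < 0. -/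
open Matrix

open Matrix BigOperators

open scoped Classical

lemma specRad_lt_one_aux {N : ℕ} {W : Matrix (Fin N) (Fin N) ℝ}
    (hGA : GroundAssumption W) (σU : Finset (Fin N))
    (hA : ∀ i ∈ σU, ∀ j ∈ σU, 0 ≤ W i j)
    (Y : Fin N → ℝ) (hY : ∀ i ∈ σU, 0 < Y i)
    (hAY : ∀ i ∈ σU, ∑ j ∈ σU, W i j * Y j ≤ Y i) :
    specRad (W.submatrix (Subtype.val : {i // i ∈ σU} → Fin N) Subtype.val) < 1 := by
  set A : Matrix {i // i ∈ σU} {i // i ∈ σU} ℝ :=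
    W.submatrix (Subtype.val : {i // i ∈ σU} → Fin N) Subtype.val with hAdef
  set M : Matrix {i // i ∈ σU} {i // i ∈ σU} ℂ := A.map Complex.ofReal with hMdef
  have hAnn : ∀ i j : {i // i ∈ σU}, 0 ≤ A i j := fun i j => hA i.1 i.2 j.1 j.2
  -- key step: every complex eigenvalue has modulus < 1
  have key : ∀ μ ∈ spectrum ℂ M, ‖μ‖ < 1 := by
    intro μ hμ
    by_contra hge
    push_neg at hge
    rw [spectrum.mem_iff, Matrix.isUnit_iff_isUnit_det, isUnit_iff_ne_zero, not_not] at hμ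
    obtain ⟨v, hv0, hv⟩ := (Matrix.exists_mulVec_eq_zero_iff).mpr hμ
    have heig : ∀ i, M.mulVec v i = μ * v i := by
      intro i
      have h := congrFun hv i
      rw [Matrix.sub_mulVec, Algebra.algebraMap_eq_smul_one,
        Matrix.smul_mulVec, Matrix.one_mulVec] at h
      have := sub_eq_zero.mp h
      simpa [Pi.smul_apply, smul_eq_mul] using this.symm
    obtain ⟨k, hk0⟩ := Function.ne_iff.mp hv0
    have hk : v k ≠ 0 := by simpa using hk0
    have hYpos : ∀ j : {i // i ∈ σU}, 0 < Y j.1 := fun j => hY j.1 j.2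
    obtain ⟨i0, -, hmax⟩ := Finset.exists_max_image Finset.univ
      (fun i : {i // i ∈ σU} => ‖v i‖ / Y i.1) ⟨k, Finset.mem_univ k⟩
    set c : ℝ := ‖v i0‖ / Y i0.1 with hcdef
    have hc : ∀ j : {i // i ∈ σU}, ‖v j‖ ≤ c * Y j.1 := by
      intro j
      have := hmax j (Finset.mem_univ j)
      exact (div_le_iff₀ (hYpos j)).mp this
    have hcpos : 0 < c := by
      have h1 : (0:ℝ) < ‖v k‖ / Y k.1 := div_pos (norm_pos_iff.mpr hk) (hYpos k)
      exact lt_of_lt_of_le h1 (hmax k (Finset.mem_univ k))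
    set S : Finset {i // i ∈ σU} :=
      Finset.univ.filter (fun i => ‖v i‖ = c * Y i.1) with hSdef
    have hi0S : i0 ∈ S := by
      simp only [hSdef, Finset.mem_filter, Finset.mem_univ, true_and]
      rw [hcdef, div_mul_cancel₀ _ (ne_of_gt (hYpos i0))]
    -- for i in the argmax set S: equality holds and positive entries stay in S
    have main : ∀ i ∈ S, (∑ j : {i // i ∈ σU}, A i j * Y j.1 = Y i.1) ∧
        (∀ j : {i // i ∈ σU}, 0 < A i j → j ∈ S) := by
      intro i hiS
      have hieq : ‖v i‖ = c * Y i.1 := by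
        simpa [hSdef] using hiS
      have le1 : ‖v i‖ ≤ ∑ j, A i j * ‖v j‖ := by
        calc ‖v i‖ ≤ ‖μ‖ * ‖v i‖ := le_mul_of_one_le_left (norm_nonneg _) hge
        _ = ‖μ * v i‖ := (norm_mul _ _).symm
        _ = ‖∑ j, M i j * v j‖ := by rw [← heig i]; rfl
        _ ≤ ∑ j, ‖M i j * v j‖ := norm_sum_le _ _
        _ = ∑ j, A i j * ‖v j‖ := by
            refine Finset.sum_congr rfl fun j _ => ?_
            rw [norm_mul]
            congr 1
            simp [hMdef, Complex.norm_real, abs_of_nonneg (hAnn i j)]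
      have le2 : ∀ j : {i // i ∈ σU}, A i j * ‖v j‖ ≤ A i j * (c * Y j.1) :=
        fun j => mul_le_mul_of_nonneg_left (hc j) (hAnn i j)
      have le3 : ∑ j, A i j * (c * Y j.1) = c * ∑ j, A i j * Y j.1 := by
        rw [Finset.mul_sum]; exact Finset.sum_congr rfl fun j _ => by ring
      have le4 : ∑ j : {i // i ∈ σU}, A i j * Y j.1 ≤ Y i.1 := by
        have := hAY i.1 i.2
        rwa [← Finset.sum_coe_sort σU (fun j => W i.1 j * Y j)] at this
      -- pinch
      have chain : ∑ j, A i j * (c * Y j.1) ≤ ‖v i‖ := by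
        rw [le3, hieq]
        exact mul_le_mul_of_nonneg_left le4 (le_of_lt hcpos)
      have hsum_eq : ∑ j, A i j * ‖v j‖ = ∑ j, A i j * (c * Y j.1) :=
        le_antisymm (Finset.sum_le_sum fun j _ => le2 j)
          (le_trans chain le1)
      have heqY : ∑ j : {i // i ∈ σU}, A i j * Y j.1 = Y i.1 := by
        have h5 : ‖v i‖ ≤ c * ∑ j, A i j * Y j.1 := by
          rw [← le3, ← hsum_eq]; exact le1
        rw [hieq] at h5
        have := (mul_le_mul_iff_right₀ hcpos).mp h5
        exact le_antisymm le4 this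
      refine ⟨heqY, fun j hj => ?_⟩
      have hterm := (Finset.sum_eq_sum_iff_of_le (fun j _ => le2 j)).mp hsum_eq j
        (Finset.mem_univ j)
      have : ‖v j‖ = c * Y j.1 := by
        have := mul_left_cancel₀ (ne_of_gt hj) hterm
        exact this
      simp only [hSdef, Finset.mem_filter, Finset.mem_univ, true_and]
      exact this
    -- build the contradiction with the Ground Assumption on S' = image of S
    set S' : Finset (Fin N) := S.image (fun i => i.1) with hS'def
    have hS'ne : S'.Nonempty := ⟨i0.1, Finset.mem_image_of_mem _ hi0S⟩
    have hS'sub : ∀ k ∈ S', k ∈ σU := by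
      intro k hk
      obtain ⟨a, -, ha⟩ := Finset.mem_image.mp hk
      exact ha ▸ a.2
    apply hGA S' hS'ne
    rw [← Matrix.exists_mulVec_eq_zero_iff]
    refine ⟨fun i => Y i.1, ?_, ?_⟩
    · intro h
      have := congrFun h ⟨i0.1, Finset.mem_image_of_mem _ hi0S⟩
      simp only [Pi.zero_apply] at this
      exact (ne_of_gt (hY i0.1 i0.2)) this
    · funext i
      obtain ⟨iv, hiv⟩ := i
      obtain ⟨a, haS, ha⟩ := Finset.mem_image.mp hiv
      have hzero : ∀ j : {i // i ∈ σU}, j ∉ S → A a j * Y j.1 = 0 := by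
        intro j hj
        rcases lt_or_eq_of_le (hAnn a j) with h | h
        · exact absurd ((main a haS).2 j h) hj
        · rw [← h, zero_mul]
      have hsum2 : ∑ j : {i // i ∈ S'}, W iv j.1 * Y j.1 = Y iv := by
        calc ∑ j : {i // i ∈ S'}, W iv j.1 * Y j.1
            = ∑ j ∈ S', W iv j * Y j :=
              Finset.sum_coe_sort S' (fun j => W iv j * Y j)
          _ = ∑ b ∈ S, W iv b.1 * Y b.1 :=
              Finset.sum_image (fun p _ q _ h => Subtype.ext h)
          _ = ∑ j : {i // i ∈ σU}, A a j * Y j.1 := by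
              rw [← ha]
              exact Finset.sum_subset (Finset.subset_univ S)
                (fun j _ hj => hzero j hj)
          _ = Y a.1 := (main a haS).1
          _ = Y iv := by rw [ha]
      have hsum1 : ∑ j : {i // i ∈ S'},
          (1 : Matrix (Fin N) (Fin N) ℝ) iv j.1 * Y j.1 = Y iv := by
        have h1' : ∀ j : {i // i ∈ S'},
            (1 : Matrix (Fin N) (Fin N) ℝ) iv j.1 * Y j.1
              = if (⟨iv, hiv⟩ : {i // i ∈ S'}) = j then Y j.1 else 0 := by
          intro j
          by_cases h : (⟨iv, hiv⟩ : {i // i ∈ S'}) = j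
          · subst h; simp [Matrix.one_apply]
          · rw [Matrix.one_apply, if_neg (fun hh => h (Subtype.ext hh)),
              if_neg h, zero_mul]
        rw [Finset.sum_congr rfl fun j _ => h1' j, Finset.sum_ite_eq]
        simp
      show ∑ j : {i // i ∈ S'},
          ((1 : Matrix (Fin N) (Fin N) ℝ) - W) iv j.1 * Y j.1 = 0
      calc ∑ j : {i // i ∈ S'}, ((1 : Matrix (Fin N) (Fin N) ℝ) - W) iv j.1 * Y j.1
          = ∑ j : {i // i ∈ S'}, ((1 : Matrix (Fin N) (Fin N) ℝ) iv j.1 * Y j.1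
              - W iv j.1 * Y j.1) := by
            exact Finset.sum_congr rfl fun j _ => by rw [Matrix.sub_apply, sub_mul]
        _ = 0 := by rw [Finset.sum_sub_distrib, hsum1, hsum2, sub_self]
  -- conclude about the supremum
  rw [specRad]
  set T : Set ℝ := {r : ℝ | ∃ μ ∈ spectrum ℂ M, r = ‖μ‖} with hTdef
  have hTfin : T.Finite := by
    have himg : T = (fun μ : ℂ => ‖μ‖) '' spectrum ℂ M := by
      ext r
      simp [hTdef, Set.mem_image, eq_comm]
    rw [himg]
    exact (Matrix.finite_spectrum M).image _
  rcases Set.eq_empty_or_nonempty T with h | h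
  · rw [h, Real.sSup_empty]; norm_num
  · have := Set.Nonempty.csSup_mem h hTfin
    obtain ⟨μ, hμ, hr⟩ := this
    rw [hr]
    exact key μ hμ

/-- necessity of the spectral and graph conditions in the reduced
single-inhibitory-neuron setting. Here the unique inhibitory neuron is `Fin.last m`,
whose row is zero; `τ = σ ⊔ {n}` and `E_U ∩ σ = {j ∈ σ : W j n = 0}`. If there is an
entrywise positive `x` (indexed by `τ`) with `(I−W)_τ x ≥ 0` and `−W_{τ̄τ} x ≥ 0`,
then `(I−W)_{E_U ∩ σ}` is a nonsingular M-matrix, i.e. `ρ(W_{E_U ∩ σ}) < 1`, and every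
`j ∈ E \ σ` with a positive synapse from some `i ∈ σ` receives inhibition
(`W j n < 0`). -/
theorem necessity_single_inhibitory {m : ℕ} (W : Matrix (Fin (m+1)) (Fin (m+1)) ℝ)
    (hdiag : ∀ i, W i i = 0)
    (hexc : ∀ j : Fin (m+1), j ≠ Fin.last m → ∀ i, 0 ≤ W i j)
    (hinh : ∀ i, W i (Fin.last m) ≤ 0)
    (hrow : ∀ k, W (Fin.last m) k = 0)
    (hGA : GroundAssumption W)
    (σ : Finset (Fin (m+1))) (hne : σ.Nonempty) (hσ : Fin.last m ∉ σ)
    (x : {i // i ∈ insert (Fin.last m) σ} → ℝ) (hx : ∀ i, 0 < x i)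
    (h1 : ∀ i : {i // i ∈ insert (Fin.last m) σ},
      0 ≤ ∑ j : {i // i ∈ insert (Fin.last m) σ},
        ((1 : Matrix (Fin (m+1)) (Fin (m+1)) ℝ) - W) i.1 j.1 * x j)
    (h2 : ∀ i ∉ insert (Fin.last m) σ,
      0 ≤ ∑ j : {i // i ∈ insert (Fin.last m) σ}, -(W i j.1) * x j) :
    (IsNonsingMMatrix
        (((1 : Matrix (Fin (m+1)) (Fin (m+1)) ℝ) - W).submatrix
          (Subtype.val : {i // i ∈ σ.filter (fun j => W j (Fin.last m) = 0)} → Fin (m+1))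
          Subtype.val) ∧
      specRad (W.submatrix
          (Subtype.val : {i // i ∈ σ.filter (fun j => W j (Fin.last m) = 0)} → Fin (m+1))
          Subtype.val) < 1) ∧
    ∀ j : Fin (m+1), j ≠ Fin.last m → j ∉ σ →
      (∃ i ∈ σ, 0 < W j i) → W j (Fin.last m) < 0 := by
  set X : Fin (m+1) → ℝ :=
    fun k => if h : k ∈ insert (Fin.last m) σ then x ⟨k, h⟩ else 0 with hXdef
  have hXpos : ∀ k, k ∈ insert (Fin.last m) σ → 0 < X k := by
    intro k hk
    simp only [hXdef, dif_pos hk]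
    exact hx _
  have hXnn : ∀ k, 0 ≤ X k := by
    intro k
    by_cases hk : k ∈ insert (Fin.last m) σ
    · exact le_of_lt (hXpos k hk)
    · simp only [hXdef]
      rw [dif_neg hk]
  have hxX : ∀ j : {j // j ∈ insert (Fin.last m) σ}, X j.1 = x j := by
    intro j
    simp only [hXdef, dif_pos j.2]
  have hsum_conv : ∀ g : Fin (m+1) → ℝ,
      ∑ j : {j // j ∈ insert (Fin.last m) σ}, g j.1 * x j
        = ∑ j ∈ insert (Fin.last m) σ, g j * X j := by
    intro g
    rw [← Finset.sum_coe_sort (insert (Fin.last m) σ) (fun j => g j * X j)]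
    exact Finset.sum_congr rfl fun j _ => by rw [hxX j]
  have hστ : σ ⊆ insert (Fin.last m) σ := Finset.subset_insert _ _
  have hσne : ∀ j ∈ σ, j ≠ Fin.last m := fun j hj hjn => hσ (hjn ▸ hj)
  have hσUσ : σ.filter (fun j => W j (Fin.last m) = 0) ⊆ σ := Finset.filter_subset _ _
  -- the subinvariance inequality on σU
  have hAY : ∀ i ∈ σ.filter (fun j => W j (Fin.last m) = 0),
      ∑ j ∈ σ.filter (fun j => W j (Fin.last m) = 0), W i j * X j ≤ X i := by
    intro i hi
    obtain ⟨hiσ, hiW⟩ := Finset.mem_filter.mp hi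
    have hiτ : i ∈ insert (Fin.last m) σ := hστ hiσ
    have h0 := h1 ⟨i, hiτ⟩
    rw [hsum_conv (fun j => ((1 : Matrix (Fin (m+1)) (Fin (m+1)) ℝ) - W) i j)] at h0
    have hsplit : ∑ j ∈ insert (Fin.last m) σ,
        ((1 : Matrix (Fin (m+1)) (Fin (m+1)) ℝ) - W) i j * X j
        = X i - ∑ j ∈ insert (Fin.last m) σ, W i j * X j := by
      rw [Finset.sum_congr rfl (fun j _ => by
        rw [Matrix.sub_apply, sub_mul]), Finset.sum_sub_distrib]
      congr 1
      have he : ∀ j ∈ insert (Fin.last m) σ,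
          (1 : Matrix (Fin (m+1)) (Fin (m+1)) ℝ) i j * X j
          = if i = j then X j else 0 := by
        intro j _
        rw [Matrix.one_apply]
        split <;> simp
      rw [Finset.sum_congr rfl he, Finset.sum_ite_eq, if_pos hiτ]
    rw [hsplit] at h0
    have hτle : ∑ j ∈ σ.filter (fun j => W j (Fin.last m) = 0), W i j * X j
        ≤ ∑ j ∈ insert (Fin.last m) σ, W i j * X j := by
      apply Finset.sum_le_sum_of_subset_of_nonneg (hσUσ.trans hστ)
      intro j hjτ hjσU
      rcases Finset.mem_insert.mp hjτ with hj | hj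
      · rw [hj, hiW, zero_mul]
      · exact mul_nonneg (hexc j (hσne j hj) i) (hXnn j)
    linarith
  have hA : ∀ i ∈ σ.filter (fun j => W j (Fin.last m) = 0),
      ∀ j ∈ σ.filter (fun j => W j (Fin.last m) = 0), 0 ≤ W i j :=
    fun i _ j hj => hexc j (hσne j (hσUσ hj)) i
  have hY : ∀ i ∈ σ.filter (fun j => W j (Fin.last m) = 0), 0 < X i :=
    fun i hi => hXpos i (hστ (hσUσ hi))
  have hspec := specRad_lt_one_aux hGA (σ.filter (fun j => W j (Fin.last m) = 0)) hA X hY hAY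
  refine ⟨⟨?_, hspec⟩, ?_⟩
  · -- nonsingular M-matrix
    refine ⟨1, W.submatrix
        (Subtype.val : {i // i ∈ σ.filter (fun j => W j (Fin.last m) = 0)} → Fin (m+1))
        Subtype.val,
      fun i j => hA i.1 i.2 j.1 j.2, by simpa using hspec, ?_⟩
    rw [one_smul]
    have hsub : ((1 : Matrix (Fin (m+1)) (Fin (m+1)) ℝ) - W).submatrix
        (Subtype.val : {i // i ∈ σ.filter (fun j => W j (Fin.last m) = 0)} → Fin (m+1))
        (Subtype.val : {i // i ∈ σ.filter (fun j => W j (Fin.last m) = 0)} → Fin (m+1))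
        = (1 : Matrix (Fin (m+1)) (Fin (m+1)) ℝ).submatrix
            (Subtype.val : {i // i ∈ σ.filter (fun j => W j (Fin.last m) = 0)} → Fin (m+1))
            (Subtype.val : {i // i ∈ σ.filter (fun j => W j (Fin.last m) = 0)} → Fin (m+1))
          - W.submatrix
            (Subtype.val : {i // i ∈ σ.filter (fun j => W j (Fin.last m) = 0)} → Fin (m+1))
            (Subtype.val : {i // i ∈ σ.filter (fun j => W j (Fin.last m) = 0)} → Fin (m+1)) := by
      ext i j
      simp [Matrix.sub_apply]
    rw [hsub, Matrix.submatrix_one _ Subtype.val_injective]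
  · -- graph condition
    rintro j hjn hjσ ⟨i, hiσ, hWji⟩
    have hjτ : j ∉ insert (Fin.last m) σ := by
      intro hj
      rcases Finset.mem_insert.mp hj with h | h
      · exact hjn h
      · exact hjσ h
    have h0 := h2 j hjτ
    rw [hsum_conv (fun k => -(W j k))] at h0
    rw [Finset.sum_insert hσ] at h0
    have hneg : ∑ k ∈ σ, -(W j k) * X k < 0 := by
      have hle : ∀ k ∈ σ, -(W j k) * X k ≤ 0 := by
        intro k hk
        have := mul_nonneg (hexc k (hσne k hk) j) (hXnn k)
        nlinarith
      have hstrict : -(W j i) * X i < 0 := by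
        have hXi : 0 < X i := hXpos i (hστ hiσ)
        nlinarith
      calc ∑ k ∈ σ, -(W j k) * X k
          < ∑ k ∈ σ, (0:ℝ) := Finset.sum_lt_sum hle ⟨i, hiσ, hstrict⟩
        _ = 0 := by simp
    have hXn : 0 < X (Fin.last m) := hXpos _ (Finset.mem_insert_self _ _)
    have hpos : 0 < -(W j (Fin.last m)) * X (Fin.last m) := by linarith
    nlinarith
end
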